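/- arXiv:2212.06911 — 8 statements merged into one kernel-verified Lean document; each statement's English description precedes it below -/
import Mathlib

section
/- Let A, B ⊆ ℝⁿ be closed convex sets with A ∩ B ≠ ∅ and let z ∈ ℝⁿ be centralized with respect to A and B. Define the halfspaces H_A := {x ∈ ℝⁿ : ⟨x − P_A(z), z − P_A(z)⟩ ≤ 0} and H_B := {x ∈ ℝⁿ : ⟨x − P_B(z), z − P_B(z)⟩ ≤ 0}. Then any point c lying in the affine hull of {z, R_A(z), R_B(z)} and equidistant from z, R_A(z) and R_B(z) equals the projection P_{H_A ∩ H_B}(z) of z onto H_A ∩ H_B. -/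
noncomputable section

open Filter Metric RealInnerProductSpace

/-- Euclidean space ℝⁿ. -/
abbrev Euc (n : ℕ) := EuclideanSpace ℝ (Fin n)

/-- `P` is the metric projection onto `A`: `P x` is a point of `A` nearest to `x`. -/
def IsProjection {n : ℕ} (A : Set (Euc n)) (P : Euc n → Euc n) : Prop :=
  ∀ x, P x ∈ A ∧ ∀ a ∈ A, ‖x - P x‖ ≤ ‖x - a‖

/-- Reflection `R_A = 2 P_A - Id`, given the projection `P = P_A`. -/
def reflect {n : ℕ} (P : Euc n → Euc n) (x : Euc n) : Euc n := (2 : ℝ) • P x - x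

/-- `Z̄_{A,B} = Z̃_{A,B} ∘ Z_{A,B}`, where `Z_{A,B} = P_A ∘ P_B` and
`Z̃_{A,B} = (1/2)(P_A + P_B)`. -/
def Zbar {n : ℕ} (PA PB : Euc n → Euc n) (x : Euc n) : Euc n :=
  (2⁻¹ : ℝ) • (PA (PA (PB x)) + PB (PA (PB x)))

/-- `c` is the circumcenter of `w`, `R_A w`, `R_B w`: it lies in the affine hull of these
three points and is equidistant from them. -/
def IsCircumcenter {n : ℕ} (PA PB : Euc n → Euc n) (w c : Euc n) : Prop :=
  c ∈ affineSpan ℝ ({w, reflect PA w, reflect PB w} : Set (Euc n)) ∧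
    ‖c - w‖ = ‖c - reflect PA w‖ ∧ ‖c - w‖ = ‖c - reflect PB w‖

/- Auxiliary lemmas -/

/-- Scalar sign lemma. -/
lemma scalar_sign {p q r s t : ℝ} (hp : 0 ≤ p) (hq : 0 ≤ q) (hr : r ≤ 0)
    (hcs : r ^ 2 ≤ p * q)
    (e1 : s * p + t * r = p) (e2 : s * r + t * q = q)
    (hps : p = 0 → s = 0) (hqt : q = 0 → t = 0) :
    0 ≤ s ∧ 0 ≤ t := by
  rcases eq_or_lt_of_le hp with hp0 | hp0
  · have hs : s = 0 := hps hp0.symm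
    subst hs
    rcases eq_or_lt_of_le hq with hq0 | hq0
    · exact ⟨le_refl 0, le_of_eq (hqt hq0.symm).symm⟩
    · have ht : t = 1 := by
        have h0 : t * q = q := by linarith [e2]
        have := hq0
        have hq' : q ≠ 0 := ne_of_gt hq0
        field_simp at h0
        exact h0
      exact ⟨le_refl 0, by rw [ht]; norm_num⟩
  · rcases eq_or_lt_of_le hq with hq0 | hq0
    · have ht : t = 0 := hqt hq0.symm
      subst ht
      have hr0 : r = 0 := by nlinarith
      have hs : s = 1 := by
        rw [hr0] at e1
        have : s * p = p := by linarith
        have hp' : p ≠ 0 := ne_of_gt hp0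
        field_simp at this
        exact this
      exact ⟨by rw [hs]; norm_num, le_refl 0⟩
    · have h1 : s * (p * q - r ^ 2) = q * (p - r) := by linear_combination q * e1 - r * e2
      have h2 : t * (p * q - r ^ 2) = p * (q - r) := by linear_combination p * e2 - r * e1
      have hD : 0 < p * q - r ^ 2 := by
        rcases eq_or_lt_of_le hcs with h | h
        · exfalso
          have : p * (q - r) = 0 := by rw [← h2, ← h]; ring
          nlinarith
        · linarith
      constructor
      · nlinarith
      · nlinarith

/-- Equidistance implies orthogonality. -/
lemma ortho {n : ℕ} (z a c : Euc n) (h : ‖c - z‖ = ‖c - ((2:ℝ) • a - z)‖) :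
    ⟪c - a, z - a⟫ = 0 := by
  have h2 : ‖c - z‖ ^ 2 = ‖c - ((2:ℝ) • a - z)‖ ^ 2 := by rw [h]
  have e1 : c - ((2:ℝ) • a - z) = (c - z) - (2:ℝ) • (a - z) := by
    rw [smul_sub, two_smul, two_smul]; abel
  rw [e1, norm_sub_sq_real (c - z) ((2:ℝ) • (a - z)), real_inner_smul_right, norm_smul] at h2
  have hn2 : ‖(2:ℝ)‖ = 2 := by norm_num
  rw [hn2] at h2
  have h3 : ⟪c - z, a - z⟫ = ‖a - z‖ ^ 2 := by nlinarith [h2]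
  have e2 : c - a = (c - z) - (a - z) := by abel
  have e3 : z - a = -(a - z) := by abel
  rw [e2, e3, inner_neg_right, inner_sub_left, real_inner_self_eq_norm_sq, h3]
  ring

set_option maxHeartbeats 1000000 in
/-- If `z` is centralized with respect to `A` and `B`, then the circumcenter of
`z, R_A(z), R_B(z)` coincides with the projection of `z` onto `H_A ∩ H_B`. -/
theorem stmt2 {n : ℕ} (A B : Set (Euc n))
    (hAcl : IsClosed A) (hAcv : Convex ℝ A) (hBcl : IsClosed B) (hBcv : Convex ℝ B)
    (hAB : (A ∩ B).Nonempty)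
    (PA PB : Euc n → Euc n) (hPA : IsProjection A PA) (hPB : IsProjection B PB)
    (z : Euc n)
    (hcent : ⟪reflect PA z - z, reflect PB z - z⟫ ≤ 0)
    (c : Euc n)
    (hcaff : c ∈ affineSpan ℝ ({z, reflect PA z, reflect PB z} : Set (Euc n)))
    (hcA : ‖c - z‖ = ‖c - reflect PA z‖) (hcB : ‖c - z‖ = ‖c - reflect PB z‖)
    (PH : Euc n → Euc n)
    (hPH : IsProjection
      ({x | ⟪x - PA z, z - PA z⟫ ≤ 0} ∩ {x | ⟪x - PB z, z - PB z⟫ ≤ 0}) PH) :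
    c = PH z := by
  classical
  set a := PA z with ha
  set b := PB z with hb
  set u := PH z with hu
  set Hset : Set (Euc n) :=
    ({x | ⟪x - a, z - a⟫ ≤ 0} ∩ {x | ⟪x - b, z - b⟫ ≤ 0}) with hHset
  -- orthogonality relations
  have hra : reflect PA z = (2:ℝ) • a - z := rfl
  have hrb : reflect PB z = (2:ℝ) • b - z := rfl
  have ha0 : ⟪c - a, z - a⟫ = 0 := ortho z a c (by rwa [hra] at hcA)
  have hb0 : ⟪c - b, z - b⟫ = 0 := ortho z b c (by rwa [hrb] at hcB)
  -- scalar quantities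
  set p := ⟪z - a, z - a⟫ with hp'
  set q := ⟪z - b, z - b⟫ with hq'
  set r := ⟪z - a, z - b⟫ with hr'
  have hp : 0 ≤ p := real_inner_self_nonneg
  have hq : 0 ≤ q := real_inner_self_nonneg
  have hpn : p = ‖z - a‖ ^ 2 := real_inner_self_eq_norm_sq _
  have hqn : q = ‖z - b‖ ^ 2 := real_inner_self_eq_norm_sq _
  have hcs : r ^ 2 ≤ p * q := by
    have h1 := abs_real_inner_le_norm (z - a) (z - b)
    have h2 : |r| ^ 2 = r ^ 2 := sq_abs r
    nlinarith [norm_nonneg (z - a), norm_nonneg (z - b), abs_nonneg r]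
  have hr : r ≤ 0 := by
    have e1 : reflect PA z - z = (2:ℝ) • (a - z) := by
      rw [hra, smul_sub, two_smul, two_smul]; abel
    have e2 : reflect PB z - z = (2:ℝ) • (b - z) := by
      rw [hrb, smul_sub, two_smul, two_smul]; abel
    rw [e1, e2, real_inner_smul_left, real_inner_smul_right] at hcent
    have e3 : a - z = -(z - a) := by abel
    have e4 : b - z = -(z - b) := by abel
    rw [e3, e4, inner_neg_neg] at hcent
    linarith
  -- coefficients from the affine span
  obtain ⟨s, t, hc', hps, hqt⟩ : ∃ s t : ℝ, c - z = s • (a - z) + t • (b - z) ∧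
      (p = 0 → s = 0) ∧ (q = 0 → t = 0) := by
    have hzmem : z ∈ affineSpan ℝ ({z, reflect PA z, reflect PB z} : Set (Euc n)) :=
      mem_affineSpan ℝ (by simp)
    have h1 : c -ᵥ z ∈ (affineSpan ℝ ({z, reflect PA z, reflect PB z} : Set (Euc n))).direction :=
      AffineSubspace.vsub_mem_direction hcaff hzmem
    rw [direction_affineSpan,
      vectorSpan_eq_span_vsub_set_right ℝ (Set.mem_insert z _)] at h1
    have himg : (· -ᵥ z) '' ({z, reflect PA z, reflect PB z} : Set (Euc n)) =
        {(0 : Euc n), reflect PA z - z, reflect PB z - z} := by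
      simp [Set.image_insert_eq, vsub_eq_sub]
    rw [himg, Submodule.span_insert_zero, Submodule.mem_span_pair] at h1
    obtain ⟨m, k, hmk⟩ := h1
    rw [vsub_eq_sub] at hmk
    have hcz : c - z = ((2:ℝ) * m) • (a - z) + ((2:ℝ) * k) • (b - z) := by
      rw [← hmk]
      have e1 : reflect PA z - z = (2:ℝ) • (a - z) := by
        rw [hra, smul_sub, two_smul, two_smul]; abel
      have e2 : reflect PB z - z = (2:ℝ) • (b - z) := by
        rw [hrb, smul_sub, two_smul, two_smul]; abel
      rw [e1, e2, smul_smul, smul_smul, mul_comm m 2, mul_comm k 2]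
    by_cases hp0 : p = 0
    · have hva : a - z = 0 := by
        have h0 : z - a = 0 := inner_self_eq_zero.mp hp0
        have : a - z = -(z - a) := by abel
        rw [this, h0, neg_zero]
      by_cases hq0 : q = 0
      · have hvb : b - z = 0 := by
          have h0 : z - b = 0 := inner_self_eq_zero.mp hq0
          have : b - z = -(z - b) := by abel
          rw [this, h0, neg_zero]
        exact ⟨0, 0, by rw [hcz, hva, hvb]; simp, fun _ => rfl, fun _ => rfl⟩
      · exact ⟨0, (2:ℝ) * k, by rw [hcz, hva]; simp, fun _ => rfl,
          fun h => absurd h hq0⟩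
    · by_cases hq0 : q = 0
      · have hvb : b - z = 0 := by
          have h0 : z - b = 0 := inner_self_eq_zero.mp hq0
          have : b - z = -(z - b) := by abel
          rw [this, h0, neg_zero]
        exact ⟨(2:ℝ) * m, 0, by rw [hcz, hvb]; simp, fun h => absurd h hp0,
          fun _ => rfl⟩
      · exact ⟨(2:ℝ) * m, (2:ℝ) * k, hcz, fun h => absurd h hp0, fun h => absurd h hq0⟩
  -- the two linear equations
  have hcza : ⟪(c - z : Euc n), z - a⟫ = -(s * p) - t * r := by
    rw [hc', inner_add_left, real_inner_smul_left, real_inner_smul_left]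
    have e3 : a - z = -(z - a) := by abel
    have e4 : b - z = -(z - b) := by abel
    rw [e3, e4, inner_neg_left, inner_neg_left, real_inner_comm (z - a) (z - b)]
    ring
  have hczb : ⟪(c - z : Euc n), z - b⟫ = -(s * r) - t * q := by
    rw [hc', inner_add_left, real_inner_smul_left, real_inner_smul_left]
    have e3 : a - z = -(z - a) := by abel
    have e4 : b - z = -(z - b) := by abel
    rw [e3, e4, inner_neg_left, inner_neg_left]
    ring
  have eq1 : s * p + t * r = p := by
    have e : c - a = (c - z) + (z - a) := by abel
    rw [e, inner_add_left, hcza] at ha0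
    linarith
  have eq2 : s * r + t * q = q := by
    have e : c - b = (c - z) + (z - b) := by abel
    rw [e, inner_add_left, hczb] at hb0
    linarith
  obtain ⟨hs, ht⟩ := scalar_sign hp hq hr hcs eq1 eq2 hps hqt
  -- key variational inequality for c
  have hckey : ∀ x : Euc n, ⟪x - a, z - a⟫ ≤ 0 → ⟪x - b, z - b⟫ ≤ 0 →
      ⟪z - c, x - c⟫ ≤ 0 := by
    intro x hxa hxb
    have hzc : z - c = s • (z - a) + t • (z - b) := by
      have e : z - c = -(c - z) := by abel
      rw [e, hc', neg_add, ← smul_neg, ← smul_neg]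
      congr 1 <;> congr 1 <;> abel
    have hIA : ⟪(z - a : Euc n), x - c⟫ ≤ 0 := by
      have e : x - c = (x - a) - (c - a) := by abel
      rw [e, inner_sub_right, real_inner_comm (x - a) (z - a),
        real_inner_comm (c - a) (z - a), ha0]
      linarith
    have hIB : ⟪(z - b : Euc n), x - c⟫ ≤ 0 := by
      have e : x - c = (x - b) - (c - b) := by abel
      rw [e, inner_sub_right, real_inner_comm (x - b) (z - b),
        real_inner_comm (c - b) (z - b), hb0]
      linarith
    rw [hzc, inner_add_left, real_inner_smul_left, real_inner_smul_left]
    nlinarith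
  -- c lies in Hset
  have hcmem : c ∈ Hset := ⟨le_of_eq ha0, le_of_eq hb0⟩
  have huH : u ∈ Hset := (hPH z).1
  -- convexity of Hset
  have hconv : Convex ℝ Hset := by
    rw [hHset]
    apply Convex.inter
    · have hset : {x : Euc n | ⟪x - a, z - a⟫ ≤ 0} =
          {x : Euc n | ⟪(z - a : Euc n), x⟫ ≤ ⟪(z - a : Euc n), a⟫} := by
        ext x
        simp only [Set.mem_setOf_eq]
        rw [real_inner_comm (z - a) (x - a), inner_sub_right, sub_nonpos]
      rw [hset]
      exact convex_halfSpace_le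
        ⟨fun x y => inner_add_right _ _ _, fun r x => real_inner_smul_right _ _ r⟩ _
    · have hset : {x : Euc n | ⟪x - b, z - b⟫ ≤ 0} =
          {x : Euc n | ⟪(z - b : Euc n), x⟫ ≤ ⟪(z - b : Euc n), b⟫} := by
        ext x
        simp only [Set.mem_setOf_eq]
        rw [real_inner_comm (z - b) (x - b), inner_sub_right, sub_nonpos]
      rw [hset]
      exact convex_halfSpace_le
        ⟨fun x y => inner_add_right _ _ _, fun r x => real_inner_smul_right _ _ r⟩ _
  -- variational inequality for u
  haveI : Nonempty ↑Hset := ⟨⟨u, huH⟩⟩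
  have hbdd : BddBelow (Set.range fun w : Hset => ‖z - (w : Euc n)‖) :=
    ⟨0, by rintro y ⟨w, rfl⟩; exact norm_nonneg _⟩
  have hinf : ‖z - u‖ = ⨅ w : Hset, ‖z - (w : Euc n)‖ :=
    le_antisymm (le_ciInf fun w => (hPH z).2 w w.2) (ciInf_le hbdd ⟨u, huH⟩)
  have hukey := (norm_eq_iInf_iff_real_inner_le_zero hconv huH).mp hinf
  -- combine
  have A1 : ⟪(z - c : Euc n), u - c⟫ ≤ 0 := hckey u huH.1 huH.2
  have A2 : ⟪(z - u : Euc n), c - u⟫ ≤ 0 := hukey c hcmem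
  have hfin : ⟪(u - c : Euc n), u - c⟫ ≤ 0 := by
    have key : ⟪(u - c : Euc n), u - c⟫ = ⟪(z - c : Euc n), u - c⟫ + ⟪(z - u : Euc n), c - u⟫ := by
      have e2 : c - u = -(u - c) := by abel
      rw [e2, inner_neg_right]
      have e : (u : Euc n) - c = (z - c) - (z - u) := by abel
      nth_rewrite 1 [e]
      rw [inner_sub_left]
      ring
    linarith
  have : u - c = 0 := real_inner_self_nonpos.mp hfin
  have := sub_eq_zero.mp this
  exact this.symm
end
end

section
/- Let A, B ⊆ ℝⁿ be closed convex sets with A ∩ B ≠ ∅ and let z ∈ ℝⁿ be centralized with respect to A and B. Let c be a point in the affine hull of {z, R_A(z), R_B(z)} equidistant from z, R_A(z) and R_B(z). Then for every s ∈ A ∩ B, ‖c − s‖² ≤ ‖z − s‖² − ‖z − c‖². -/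
noncomputable section

open Filter Metric RealInnerProductSpace

set_option maxHeartbeats 800000

noncomputable section

open Filter Metric RealInnerProductSpace

lemma proj_inner {n : ℕ} {A : Set (Euc n)} (hAcv : Convex ℝ A) {P : Euc n → Euc n}
    (hP : IsProjection A P) (x : Euc n) {s : Euc n} (hs : s ∈ A) :
    ⟪x - P x, s - P x⟫ ≤ 0 := by
  haveI : Nonempty A := ⟨⟨P x, (hP x).1⟩⟩
  have hbdd : BddBelow (Set.range fun w : A => ‖x - (w : Euc n)‖) := by
    refine ⟨0, ?_⟩
    rintro y ⟨w, rfl⟩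
    exact norm_nonneg _
  have hle : ‖x - P x‖ ≤ ⨅ w : A, ‖x - (w : Euc n)‖ :=
    le_ciInf fun w => (hP x).2 w.1 w.2
  have hge : (⨅ w : A, ‖x - (w : Euc n)‖) ≤ ‖x - P x‖ :=
    ciInf_le hbdd (⟨P x, (hP x).1⟩ : A)
  have hinf : ‖x - P x‖ = ⨅ w : A, ‖x - (w : Euc n)‖ := le_antisymm hle hge
  exact (norm_eq_iInf_iff_real_inner_le_zero hAcv (hP x).1).mp hinf s hs

lemma aux_ineq (p q r α β u v : ℝ) (hp : 0 ≤ p) (hq : 0 ≤ q) (hr : r ≤ 0)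
    (hcs : r * r ≤ p * q) (h1 : α * p + β * r = p / 2) (h2 : α * r + β * q = q / 2)
    (hu : u ≤ 0) (hv : v ≤ 0) (hup : p = 0 → u = 0) (hvq : q = 0 → v = 0) :
    α * u + β * v ≤ 0 := by
  rcases eq_or_lt_of_le hp with hp0 | hp0
  · have hu0 : u = 0 := hup hp0.symm
    have hr0 : r = 0 := by nlinarith
    rcases eq_or_lt_of_le hq with hq0 | hq0
    · have hv0 : v = 0 := hvq hq0.symm
      simp [hu0, hv0]
    · have hβ : β = 1/2 := by
        have := h2
        rw [hr0] at this
        field_simp at this ⊢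
        nlinarith
      rw [hu0, hβ]; nlinarith
  rcases eq_or_lt_of_le hq with hq0 | hq0
  · have hv0 : v = 0 := hvq hq0.symm
    have hr0 : r = 0 := by nlinarith
    have hα : α = 1/2 := by
      have := h1
      rw [hr0] at this
      nlinarith
    rw [hv0, hα]; nlinarith
  · have hαD : α * (p * q - r * r) = q * (p - r) / 2 := by linear_combination q * h1 - r * h2
    have hβD : β * (p * q - r * r) = p * (q - r) / 2 := by linear_combination p * h2 - r * h1
    have hD : 0 < p * q - r * r := by
      rcases eq_or_lt_of_le hcs with hD0 | hD0
      · exfalso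
        have hz : p * q - r * r = 0 := by linarith
        rw [hz, mul_zero] at hαD
        nlinarith [mul_pos hq0 (show (0:ℝ) < p - r by linarith)]
      · linarith
    have hα : 0 ≤ α := by
      rcases le_or_gt 0 α with h | h
      · exact h
      · exfalso; nlinarith [mul_neg_of_neg_of_pos h hD]
    have hβ : 0 ≤ β := by
      rcases le_or_gt 0 β with h | h
      · exact h
      · exfalso; nlinarith [mul_neg_of_neg_of_pos h hD]
    nlinarith [mul_nonneg hα (neg_nonneg.mpr hu), mul_nonneg hβ (neg_nonneg.mpr hv)]

/-- If `z` is centralized with respect to `A` and `B`, then the circumcenter `c` of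
`z, R_A(z), R_B(z)` satisfies `‖c - s‖² ≤ ‖z - s‖² - ‖z - c‖²` for all `s ∈ A ∩ B`. -/
theorem stmt3 {n : ℕ} (A B : Set (Euc n))
    (hAcl : IsClosed A) (hAcv : Convex ℝ A) (hBcl : IsClosed B) (hBcv : Convex ℝ B)
    (hAB : (A ∩ B).Nonempty)
    (PA PB : Euc n → Euc n) (hPA : IsProjection A PA) (hPB : IsProjection B PB)
    (z : Euc n)
    (hcent : ⟪reflect PA z - z, reflect PB z - z⟫ ≤ 0)
    (c : Euc n)
    (hcaff : c ∈ affineSpan ℝ ({z, reflect PA z, reflect PB z} : Set (Euc n)))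
    (hcA : ‖c - z‖ = ‖c - reflect PA z‖) (hcB : ‖c - z‖ = ‖c - reflect PB z‖) :
    ∀ s ∈ A ∩ B, ‖c - s‖ ^ 2 ≤ ‖z - s‖ ^ 2 - ‖z - c‖ ^ 2 := by
  intro s hs
  set a := reflect PA z with ha_def
  set b := reflect PB z with hb_def
  have hga : a - z = (2:ℝ) • (PA z - z) := by rw [ha_def]; unfold reflect; module
  have hgb : b - z = (2:ℝ) • (PB z - z) := by rw [hb_def]; unfold reflect; module
  -- perpendicular bisector identities
  have ha : ⟪c - z, a - z⟫ = ‖a - z‖ ^ 2 / 2 := by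
    have h2 : ‖c - a‖ ^ 2 = ‖c - z‖ ^ 2 - 2 * ⟪c - z, a - z⟫ + ‖a - z‖ ^ 2 := by
      rw [show c - a = (c - z) - (a - z) by abel]
      exact norm_sub_sq_real _ _
    have h3 : ‖c - z‖ ^ 2 = ‖c - a‖ ^ 2 := by rw [hcA]
    linarith
  have hb : ⟪c - z, b - z⟫ = ‖b - z‖ ^ 2 / 2 := by
    have h2 : ‖c - b‖ ^ 2 = ‖c - z‖ ^ 2 - 2 * ⟪c - z, b - z⟫ + ‖b - z‖ ^ 2 := by
      rw [show c - b = (c - z) - (b - z) by abel]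
      exact norm_sub_sq_real _ _
    have h3 : ‖c - z‖ ^ 2 = ‖c - b‖ ^ 2 := by rw [hcB]
    linarith
  -- decomposition of c - z
  have hzmem : z ∈ affineSpan ℝ ({z, a, b} : Set (Euc n)) :=
    subset_affineSpan ℝ _ (Set.mem_insert _ _)
  have hspan : c - z ∈ Submodule.span ℝ ({a - z, b - z} : Set (Euc n)) := by
    have h1 := AffineSubspace.vsub_mem_direction hcaff hzmem
    rw [direction_affineSpan,
      vectorSpan_eq_span_vsub_set_right ℝ (Set.mem_insert z {a, b})] at h1
    simpa [Set.image_insert_eq, Set.image_singleton, vsub_eq_sub, sub_self,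
      Submodule.span_insert_zero] using h1
  obtain ⟨α, β, hαβ⟩ := Submodule.mem_span_pair.mp hspan
  -- abbreviations
  have h1 : α * ‖a - z‖ ^ 2 + β * ⟪a - z, b - z⟫ = ‖a - z‖ ^ 2 / 2 := by
    rw [← ha, ← hαβ, inner_add_left, real_inner_smul_left, real_inner_smul_left,
      real_inner_self_eq_norm_sq, real_inner_comm (b - z) (a - z)]
  have h2 : α * ⟪a - z, b - z⟫ + β * ‖b - z‖ ^ 2 = ‖b - z‖ ^ 2 / 2 := by
    rw [← hb, ← hαβ, inner_add_left, real_inner_smul_left, real_inner_smul_left,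
      real_inner_self_eq_norm_sq]
  have hcs : ⟪a - z, b - z⟫ * ⟪a - z, b - z⟫ ≤ ‖a - z‖ ^ 2 * ‖b - z‖ ^ 2 := by
    have := real_inner_mul_inner_self_le (a - z) (b - z)
    rwa [real_inner_self_eq_norm_sq, real_inner_self_eq_norm_sq] at this
  -- u and v
  have hu : ⟪a - z, c - s⟫ ≤ 0 := by
    have hproj : ⟪z - PA z, s - PA z⟫ ≤ 0 := proj_inner hAcv hPA z hs.1
    have e : ⟪a - z, c - s⟫ = 2 * ⟪z - PA z, s - PA z⟫ := by
      have ha' : ⟪a - z, c - z⟫ = ‖a - z‖ ^ 2 / 2 := by rw [real_inner_comm]; exact ha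
      rw [show c - s = (c - z) - (s - z) by abel, inner_sub_right, ha', hga,
        show z - PA z = -(PA z - z) by abel,
        show s - PA z = (s - z) - (PA z - z) by abel,
        inner_neg_left, inner_sub_right, real_inner_smul_left, real_inner_smul_left,
        norm_smul]
      simp only [inner_sub_right, real_inner_self_eq_norm_sq, Real.norm_ofNat]
      have hx : ⟪PA z - z, PA z⟫ - ⟪PA z - z, z⟫ = ‖PA z - z‖ ^ 2 := by
        rw [← inner_sub_right, real_inner_self_eq_norm_sq]
      linarith
    linarith
  have hv : ⟪b - z, c - s⟫ ≤ 0 := by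
    have hproj : ⟪z - PB z, s - PB z⟫ ≤ 0 := proj_inner hBcv hPB z hs.2
    have e : ⟪b - z, c - s⟫ = 2 * ⟪z - PB z, s - PB z⟫ := by
      have hb' : ⟪b - z, c - z⟫ = ‖b - z‖ ^ 2 / 2 := by rw [real_inner_comm]; exact hb
      rw [show c - s = (c - z) - (s - z) by abel, inner_sub_right, hb', hgb,
        show z - PB z = -(PB z - z) by abel,
        show s - PB z = (s - z) - (PB z - z) by abel,
        inner_neg_left, inner_sub_right, real_inner_smul_left, real_inner_smul_left,
        norm_smul]
      simp only [inner_sub_right, real_inner_self_eq_norm_sq, Real.norm_ofNat]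
      have hx : ⟪PB z - z, PB z⟫ - ⟪PB z - z, z⟫ = ‖PB z - z‖ ^ 2 := by
        rw [← inner_sub_right, real_inner_self_eq_norm_sq]
      linarith
    linarith
  have hup : ‖a - z‖ ^ 2 = 0 → ⟪a - z, c - s⟫ = 0 := by
    intro h
    have : a - z = 0 := by
      rwa [pow_eq_zero_iff (by norm_num : 2 ≠ 0), norm_eq_zero] at h
    rw [this, inner_zero_left]
  have hvq : ‖b - z‖ ^ 2 = 0 → ⟪b - z, c - s⟫ = 0 := by
    intro h
    have : b - z = 0 := by
      rwa [pow_eq_zero_iff (by norm_num : 2 ≠ 0), norm_eq_zero] at h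
    rw [this, inner_zero_left]
  have hkey : ⟪c - z, c - s⟫ ≤ 0 := by
    have e : ⟪c - z, c - s⟫ = α * ⟪a - z, c - s⟫ + β * ⟪b - z, c - s⟫ := by
      rw [← hαβ, inner_add_left, real_inner_smul_left, real_inner_smul_left]
    rw [e]
    exact aux_ineq _ _ _ _ _ _ _ (sq_nonneg _) (sq_nonneg _) hcent hcs h1 h2 hu hv hup hvq
  -- conclude
  have e1 : ‖c - s‖ ^ 2 = ‖c - z‖ ^ 2 + 2 * ⟪c - z, z - s⟫ + ‖z - s‖ ^ 2 := by
    rw [show c - s = (c - z) + (z - s) by abel]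
    exact norm_add_sq_real _ _
  have e2 : ⟪c - z, c - s⟫ = ‖c - z‖ ^ 2 + ⟪c - z, z - s⟫ := by
    rw [show c - s = (c - z) + (z - s) by abel, inner_add_right,
      real_inner_self_eq_norm_sq]
  have e3 : ‖z - c‖ = ‖c - z‖ := norm_sub_rev _ _
  rw [e3]
  linarith
end
end
end

section
/- Let A, B ⊆ ℝⁿ be closed convex sets with A ∩ B ≠ ∅ and let z ∈ ℝⁿ. Then for every s ∈ A ∩ B, ‖T_{A,B}(z) − s‖² ≤ ‖z − s‖² − (1/8)‖z − T_{A,B}(z)‖². -/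
noncomputable section

open Filter Metric RealInnerProductSpace

/-
Write `q = P_B z`, `y = P_A q`, `b = P_B y`; since `y ∈ A`, `Z̄(z) = w` is the midpoint of `y` and
`b`, and `P_B w = b`. The variational inequality of `P_A` at `w`, tested at `y ∈ A`, then shows
that `w` is centralized: `⟪w - P_A w, w - P_B w⟫ ≤ 0`. The circumcenter `c = T z` satisfies
`⟪w - c, w - P w⟫ = ‖w - P w‖²` for `P = P_A, P_B`, and `w - c` lies in the span of the two
vectors `w - P w`; with the obtuse angle between them this makes `w - c` a nonnegative
combination of them, hence `⟪s - c, w - c⟫ ≤ 0` for `s ∈ A ∩ B`. Each of the four moves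
`z → q → y → w → c` therefore decreases `‖· - s‖²` by at least the square of its length, and
the squared lengths of four steps add up to at least `‖z - c‖² / 4`.
-/

open Submodule

theorem sq_norm_sub_le_four_mul {E : Type*} [SeminormedAddCommGroup E] (a b c d e : E) :
    ‖a - e‖ ^ 2 ≤ 4 * (‖a - b‖ ^ 2 + ‖b - c‖ ^ 2 + ‖c - d‖ ^ 2 + ‖d - e‖ ^ 2) := by
  have h : ‖a - e‖ ≤ ‖a - b‖ + ‖b - c‖ + ‖c - d‖ + ‖d - e‖ := by
    linarith [norm_sub_le_norm_sub_add_norm_sub a b c, norm_sub_le_norm_sub_add_norm_sub a c d,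
      norm_sub_le_norm_sub_add_norm_sub a d e]
  nlinarith [norm_nonneg (a - e), sq_nonneg (‖a - b‖ - ‖b - c‖), sq_nonneg (‖a - b‖ - ‖c - d‖),
    sq_nonneg (‖a - b‖ - ‖d - e‖), sq_nonneg (‖b - c‖ - ‖c - d‖),
    sq_nonneg (‖b - c‖ - ‖d - e‖), sq_nonneg (‖c - d‖ - ‖d - e‖)]

section InnerProductSpace

variable {E : Type*} [NormedAddCommGroup E] [InnerProductSpace ℝ E]

theorem sq_norm_add_sq_norm_le_of_real_inner_nonpos {x y : E} (h : ⟪x, y⟫ ≤ 0) :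
    ‖x‖ ^ 2 + ‖y‖ ^ 2 ≤ ‖x - y‖ ^ 2 := by
  rw [norm_sub_sq_real]
  linarith

/-- The negative-coefficient case is ruled out by `‖p‖² = α‖u‖² + β‖v‖² ≥ 0` when `β < 0`,
and by `(1 - α)‖u‖² = β⟪u, v⟫ ≤ 0` when `β ≥ 0`. -/
theorem eq_zero_of_real_inner_smul_add_smul_eq_of_neg {u v : E} {α β : ℝ} (huv : ⟪u, v⟫ ≤ 0)
    (hpu : ⟪α • u + β • v, u⟫ = ‖u‖ ^ 2) (hpv : ⟪α • u + β • v, v⟫ = ‖v‖ ^ 2) (hα : α < 0) :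
    u = 0 := by
  have hu : α * ‖u‖ ^ 2 + β * ⟪u, v⟫ = ‖u‖ ^ 2 := by
    rwa [inner_add_left, real_inner_smul_left, real_inner_smul_left, real_inner_self_eq_norm_sq,
      real_inner_comm] at hpu
  have hv : α * ⟪u, v⟫ + β * ‖v‖ ^ 2 = ‖v‖ ^ 2 := by
    rwa [inner_add_left, real_inner_smul_left, real_inner_smul_left,
      real_inner_self_eq_norm_sq] at hpv
  have hp : 0 ≤ α * ‖u‖ ^ 2 + β * ‖v‖ ^ 2 := by
    have h := real_inner_self_nonneg (x := α • u + β • v)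
    rwa [inner_add_right, real_inner_smul_right, real_inner_smul_right, hpu, hpv] at h
  rw [← norm_eq_zero, ← sq_eq_zero_iff]
  rcases lt_or_ge β 0 with hβ | hβ
  · nlinarith [sq_nonneg ‖u‖, sq_nonneg ‖v‖]
  · nlinarith [sq_nonneg ‖u‖, mul_nonpos_of_nonneg_of_nonpos hβ huv]

theorem real_inner_nonpos_of_mem_span_pair {u v p r : E} (huv : ⟪u, v⟫ ≤ 0)
    (hp : p ∈ span ℝ {u, v}) (hpu : ⟪p, u⟫ = ‖u‖ ^ 2) (hpv : ⟪p, v⟫ = ‖v‖ ^ 2)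
    (hru : ⟪r, u⟫ ≤ 0) (hrv : ⟪r, v⟫ ≤ 0) : ⟪r, p⟫ ≤ 0 := by
  obtain ⟨α, β, rfl⟩ := mem_span_pair.1 hp
  have hα : α * ⟪r, u⟫ ≤ 0 := by
    rcases lt_or_ge α 0 with hα | hα
    · simp [eq_zero_of_real_inner_smul_add_smul_eq_of_neg huv hpu hpv hα]
    · exact mul_nonpos_of_nonneg_of_nonpos hα hru
  have hβ : β * ⟪r, v⟫ ≤ 0 := by
    rcases lt_or_ge β 0 with hβ | hβ
    · rw [add_comm] at hpu hpv
      simp [eq_zero_of_real_inner_smul_add_smul_eq_of_neg (real_inner_comm u v ▸ huv) hpv hpu hβ]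
    · exact mul_nonpos_of_nonneg_of_nonpos hβ hrv
  rw [inner_add_right, real_inner_smul_right, real_inner_smul_right]
  linarith

end InnerProductSpace

namespace IsProjection

variable {n : ℕ} {A : Set (Euc n)} {P : Euc n → Euc n}

theorem apply_of_mem (hP : IsProjection A P) {a : Euc n} (ha : a ∈ A) : P a = a := by
  have h := (hP a).2 a ha
  rw [sub_self, norm_zero, norm_le_zero_iff, sub_eq_zero] at h
  exact h.symm

theorem norm_sub_eq_iInf (hP : IsProjection A P) (x : Euc n) :
    ‖x - P x‖ = ⨅ a : A, ‖x - a‖ := by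
  have : Nonempty A := ⟨⟨P x, (hP x).1⟩⟩
  have hbdd : BddBelow (Set.range fun a : A => ‖x - a‖) :=
    ⟨0, by rintro _ ⟨a, rfl⟩; exact norm_nonneg _⟩
  exact le_antisymm (le_ciInf fun a => (hP x).2 a a.2) (ciInf_le hbdd ⟨P x, (hP x).1⟩)

theorem real_inner_sub_sub_nonpos (hA : Convex ℝ A) (hP : IsProjection A P) (x : Euc n)
    {a : Euc n} (ha : a ∈ A) : ⟪x - P x, a - P x⟫ ≤ 0 :=
  (norm_eq_iInf_iff_real_inner_le_zero hA (hP x).1).1 (hP.norm_sub_eq_iInf x) a ha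

theorem eq_of_real_inner_sub_sub_nonpos (hA : Convex ℝ A) (hP : IsProjection A P) {x c : Euc n}
    (hc : c ∈ A) (h : ∀ a ∈ A, ⟪x - c, a - c⟫ ≤ 0) : P x = c := by
  have hsum : ‖c - P x‖ ^ 2 = ⟪x - P x, c - P x⟫ + ⟪x - c, P x - c⟫ := by
    rw [← real_inner_self_eq_norm_sq, show P x - c = -(c - P x) by abel, inner_neg_right,
      ← sub_eq_add_neg, ← inner_sub_left, sub_sub_sub_cancel_left]
  have hle : ‖c - P x‖ ^ 2 ≤ 0 := by
    linarith [hP.real_inner_sub_sub_nonpos hA x hc, h (P x) (hP x).1]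
  rw [sq_nonpos_iff, norm_eq_zero, sub_eq_zero] at hle
  exact hle.symm

theorem sq_norm_sub_add_le (hA : Convex ℝ A) (hP : IsProjection A P) (x : Euc n) {s : Euc n}
    (hs : s ∈ A) : ‖P x - s‖ ^ 2 + ‖x - P x‖ ^ 2 ≤ ‖x - s‖ ^ 2 := by
  have h := sq_norm_add_sq_norm_le_of_real_inner_nonpos (hP.real_inner_sub_sub_nonpos hA x hs)
  rwa [sub_sub_sub_cancel_right, norm_sub_rev s, add_comm] at h

theorem apply_midpoint (hA : Convex ℝ A) (hP : IsProjection A P) (y : Euc n) :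
    P ((2⁻¹ : ℝ) • (y + P y)) = P y := by
  refine hP.eq_of_real_inner_sub_sub_nonpos hA (hP y).1 fun a ha => ?_
  rw [show (2⁻¹ : ℝ) • (y + P y) - P y = (2⁻¹ : ℝ) • (y - P y) by module,
    real_inner_smul_left]
  exact mul_nonpos_of_nonneg_of_nonpos (by norm_num) (hP.real_inner_sub_sub_nonpos hA y ha)

/-- By the parallelogram law the left side equals `(‖y - s‖² + ‖P y - s‖²) / 2`. -/
theorem sq_norm_midpoint_sub_add_le (hA : Convex ℝ A) (hP : IsProjection A P) (y : Euc n)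
    {s : Euc n} (hs : s ∈ A) :
    ‖(2⁻¹ : ℝ) • (y + P y) - s‖ ^ 2 + ‖y - (2⁻¹ : ℝ) • (y + P y)‖ ^ 2 ≤ ‖y - s‖ ^ 2 := by
  have hpar := parallelogram_law_with_norm ℝ (y - s) (P y - s)
  rw [show (2⁻¹ : ℝ) • (y + P y) - s = (2⁻¹ : ℝ) • ((y - s) + (P y - s)) by module,
    show y - (2⁻¹ : ℝ) • (y + P y) = (2⁻¹ : ℝ) • ((y - s) - (P y - s)) by module,
    norm_smul, norm_smul, Real.norm_eq_abs, abs_of_pos (by norm_num : (0 : ℝ) < 2⁻¹)]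
  have hfirm := hP.sq_norm_sub_add_le hA y hs
  rw [show (y - s) - (P y - s) = y - P y by abel] at hpar ⊢
  nlinarith

end IsProjection

variable {n : ℕ} {A B : Set (Euc n)} {PA PB P : Euc n → Euc n}

def IsCentralized (PA PB : Euc n → Euc n) (w : Euc n) : Prop :=
  ⟪w - PA w, w - PB w⟫ ≤ 0

theorem Zbar_eq (hPA : IsProjection A PA) (z : Euc n) :
    Zbar PA PB z = (2⁻¹ : ℝ) • (PA (PB z) + PB (PA (PB z))) := by
  rw [Zbar, hPA.apply_of_mem (hPA _).1]

theorem isCentralized_midpoint (hA : Convex ℝ A) (hB : Convex ℝ B) (hPA : IsProjection A PA)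
    (hPB : IsProjection B PB) {y : Euc n} (hy : y ∈ A) :
    IsCentralized PA PB ((2⁻¹ : ℝ) • (y + PB y)) := by
  set w := (2⁻¹ : ℝ) • (y + PB y) with hw
  have hv : w - PB w = y - w := by rw [hPB.apply_midpoint hB, hw]; module
  have h := hPA.real_inner_sub_sub_nonpos hA w hy
  rw [show y - PA w = (y - w) + (w - PA w) by abel, inner_add_right,
    real_inner_self_eq_norm_sq] at h
  rw [IsCentralized, hv]
  nlinarith [sq_nonneg ‖w - PA w‖]

theorem real_inner_sub_eq_sq_norm_of_norm_sub_reflect {w c : Euc n}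
    (h : ‖c - w‖ = ‖c - reflect P w‖) : ⟪w - c, w - P w⟫ = ‖w - P w‖ ^ 2 := by
  rw [reflect, show c - ((2 : ℝ) • P w - w) = (c - w) + (2 : ℝ) • (w - P w) by module] at h
  have h2 : ‖c - w‖ ^ 2 = ‖(c - w) + (2 : ℝ) • (w - P w)‖ ^ 2 := by rw [h]
  rw [norm_add_sq_real, real_inner_smul_right, norm_smul, Real.norm_two] at h2
  rw [← neg_sub c w, inner_neg_left]
  linarith

theorem IsProjection.real_inner_sub_nonpos_of_norm_sub_reflect (hA : Convex ℝ A)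
    (hP : IsProjection A P) {w c s : Euc n} (hs : s ∈ A) (h : ‖c - w‖ = ‖c - reflect P w‖) :
    ⟪s - c, w - P w⟫ ≤ 0 := by
  have ho := hP.real_inner_sub_sub_nonpos hA w hs
  rw [show s - P w = (s - w) + (w - P w) by abel, inner_add_right,
    real_inner_self_eq_norm_sq, real_inner_comm] at ho
  rw [show s - c = (s - w) + (w - c) by abel, inner_add_left,
    real_inner_sub_eq_sq_norm_of_norm_sub_reflect h]
  linarith

theorem IsCircumcenter.sub_mem_span {w c : Euc n} (hT : IsCircumcenter PA PB w c) :
    w - c ∈ span ℝ {w - PA w, w - PB w} := by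
  have hdir : c - w ∈ vectorSpan ℝ ({w, reflect PA w, reflect PB w} : Set (Euc n)) := by
    rw [← direction_affineSpan]
    exact AffineSubspace.vsub_mem_direction hT.1 (mem_affineSpan ℝ (by simp))
  rw [vectorSpan_eq_span_vsub_set_right ℝ (by simp : w ∈ ({w, reflect PA w, reflect PB w} : _)),
    Set.image_insert_eq, Set.image_pair] at hdir
  refine neg_sub c w ▸ neg_mem (span_le.2 ?_ hdir)
  rintro _ (rfl | rfl | rfl)
  · simp
  · rw [SetLike.mem_coe, vsub_eq_sub, reflect,
      show (2 : ℝ) • PA w - w - w = (-2 : ℝ) • (w - PA w) by module]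
    exact smul_mem _ _ (subset_span (by simp))
  · rw [SetLike.mem_coe, vsub_eq_sub, reflect,
      show (2 : ℝ) • PB w - w - w = (-2 : ℝ) • (w - PB w) by module]
    exact smul_mem _ _ (subset_span (by simp))

theorem IsCircumcenter.sq_norm_sub_add_le (hA : Convex ℝ A) (hB : Convex ℝ B)
    (hPA : IsProjection A PA) (hPB : IsProjection B PB) {w c s : Euc n}
    (hT : IsCircumcenter PA PB w c) (hw : IsCentralized PA PB w) (hs : s ∈ A ∩ B) :
    ‖c - s‖ ^ 2 + ‖w - c‖ ^ 2 ≤ ‖w - s‖ ^ 2 := by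
  have hobtuse : ⟪w - c, s - c⟫ ≤ 0 := real_inner_comm (s - c) _ ▸
    real_inner_nonpos_of_mem_span_pair hw hT.sub_mem_span
      (real_inner_sub_eq_sq_norm_of_norm_sub_reflect hT.2.1)
      (real_inner_sub_eq_sq_norm_of_norm_sub_reflect hT.2.2)
      (hPA.real_inner_sub_nonpos_of_norm_sub_reflect hA hs.1 hT.2.1)
      (hPB.real_inner_sub_nonpos_of_norm_sub_reflect hB hs.2 hT.2.2)
  have h := sq_norm_add_sq_norm_le_of_real_inner_nonpos hobtuse
  rwa [sub_sub_sub_cancel_right, norm_sub_rev s, add_comm] at h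

theorem stmt4_general {n : ℕ} (A B : Set (Euc n))
    (hAcv : Convex ℝ A) (hBcv : Convex ℝ B)
    (PA PB : Euc n → Euc n) (hPA : IsProjection A PA) (hPB : IsProjection B PB)
    (z Tz : Euc n) (hT : IsCircumcenter PA PB (Zbar PA PB z) Tz) :
    ∀ s ∈ A ∩ B, ‖Tz - s‖ ^ 2 ≤ ‖z - s‖ ^ 2 - (1 / 8) * ‖z - Tz‖ ^ 2 := by
  rintro s ⟨hsA, hsB⟩
  set q := PB z
  set y := PA q
  set w := Zbar PA PB z with hw
  rw [Zbar_eq hPA] at hw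
  have hz := hPB.sq_norm_sub_add_le hBcv z hsB
  have hq := hPA.sq_norm_sub_add_le hAcv q hsA
  have hy := hw ▸ hPB.sq_norm_midpoint_sub_add_le hBcv y hsB
  have hcentral := hw ▸ isCentralized_midpoint hAcv hBcv hPA hPB (hPA q).1
  have hc := hT.sq_norm_sub_add_le hAcv hBcv hPA hPB hcentral ⟨hsA, hsB⟩
  have hpath := sq_norm_sub_le_four_mul z q y w Tz
  linarith [sq_nonneg ‖z - Tz‖]

/-- The cCRM operator satisfies `‖T_{A,B}(z) - s‖² ≤ ‖z - s‖² - (1/8)‖z - T_{A,B}(z)‖²`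
for all `s ∈ A ∩ B`. -/
theorem stmt4 {n : ℕ} (A B : Set (Euc n))
    (hAcl : IsClosed A) (hAcv : Convex ℝ A) (hBcl : IsClosed B) (hBcv : Convex ℝ B)
    (hAB : (A ∩ B).Nonempty)
    (PA PB : Euc n → Euc n) (hPA : IsProjection A PA) (hPB : IsProjection B PB)
    (z Tz : Euc n) (hT : IsCircumcenter PA PB (Zbar PA PB z) Tz) :
    ∀ s ∈ A ∩ B, ‖Tz - s‖ ^ 2 ≤ ‖z - s‖ ^ 2 - (1 / 8) * ‖z - Tz‖ ^ 2 :=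
  stmt4_general A B hAcv hBcv PA PB hPA hPB z Tz hT
end
end

section
/- Let C_1, …, C_m ⊆ ℝⁿ be closed convex sets with C := ∩_{i=1}^m C_i ≠ ∅, let ℓ(k), r(k) ∈ {1, …, m} be arbitrary index sequences, and let {x^k} be generated from any x^0 ∈ ℝⁿ by x^{k+1} := T_{C_{ℓ(k)}, C_{r(k)}}(x^k). Then x^{k+1} − x^k → 0 as k → ∞. -/
noncomputable section

open Filter Metric RealInnerProductSpace

variable {n : ℕ}

lemma proj_vi {A : Set (Euc n)} {P : Euc n → Euc n} (hA : Convex ℝ A)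
    (hP : IsProjection A P) (x : Euc n) {a : Euc n} (ha : a ∈ A) :
    ⟪x - P x, a - P x⟫ ≤ 0 := by
  haveI : Nonempty A := ⟨⟨P x, (hP x).1⟩⟩
  have h1 : ‖x - P x‖ = ⨅ w : A, ‖x - w‖ := by
    refine le_antisymm (le_ciInf fun w => (hP x).2 w w.2) ?_
    exact ciInf_le ⟨0, by rintro y ⟨w, rfl⟩; exact norm_nonneg _⟩ (⟨P x, (hP x).1⟩ : A)
  exact ((norm_eq_iInf_iff_real_inner_le_zero hA (hP x).1).1 h1) a ha

lemma proj_fix {A : Set (Euc n)} {P : Euc n → Euc n} (hP : IsProjection A P)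
    {y : Euc n} (hy : y ∈ A) : P y = y := by
  have := (hP y).2 y hy
  simp only [sub_self, norm_zero] at this
  have h0 : ‖y - P y‖ = 0 := le_antisymm this (norm_nonneg _)
  rw [norm_eq_zero, sub_eq_zero] at h0
  exact h0.symm

lemma proj_firm {A : Set (Euc n)} {P : Euc n → Euc n} (hA : Convex ℝ A)
    (hP : IsProjection A P) (x : Euc n) {z : Euc n} (hz : z ∈ A) :
    ‖P x - z‖^2 ≤ ‖x - z‖^2 - ‖P x - x‖^2 := by
  have h := proj_vi hA hP x hz
  have e1 : x - z = (x - P x) + (P x - z) := by abel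
  rw [e1, norm_add_sq_real]
  have e2 : ⟪x - P x, P x - z⟫ = - ⟪x - P x, z - P x⟫ := by
    rw [← inner_neg_right]; congr 1; abel
  have e3 : ‖P x - x‖ = ‖x - P x‖ := norm_sub_rev _ _
  rw [e3]
  linarith [h, e2.symm ▸ (neg_nonneg.mpr h : 0 ≤ -⟪x - P x, z - P x⟫)]

lemma circum_key {e f d g : Euc n} (hd : ∃ α β : ℝ, d = α • e + β • f)
    (h1 : ⟪d, e⟫ = ‖e‖^2) (h2 : ⟪d, f⟫ = ‖f‖^2)
    (hobt : ⟪e, f⟫ + ‖e‖^2 ≤ 0)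
    (hg1 : 0 ≤ ⟪g, e⟫) (hg2 : 0 ≤ ⟪g, f⟫) : 0 ≤ ⟪g, d⟫ := by
  obtain ⟨α, β, rfl⟩ := hd
  have hee : ⟪e, e⟫ = ‖e‖^2 := real_inner_self_eq_norm_sq e
  have hff : ⟪f, f⟫ = ‖f‖^2 := real_inner_self_eq_norm_sq f
  have hfe : ⟪f, e⟫ = ⟪e, f⟫ := real_inner_comm e f
  rw [inner_add_left, real_inner_smul_left, real_inner_smul_left, hee, hfe] at h1
  rw [inner_add_left, real_inner_smul_left, real_inner_smul_left, hff] at h2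
  rw [inner_add_right, real_inner_smul_right, real_inner_smul_right]
  -- h1 : α * ‖e‖^2 + β * ⟪e,f⟫ = ‖e‖^2
  -- h2 : α * ⟪e,f⟫ + β * ‖f‖^2 = ‖f‖^2
  set γ : ℝ := ⟪e, f⟫ with hγ
  have hcs : γ^2 ≤ ‖e‖^2 * ‖f‖^2 := by
    nlinarith [abs_real_inner_le_norm e f, sq_abs γ, abs_nonneg γ, norm_nonneg e, norm_nonneg f]
  rcases lt_or_eq_of_le hcs with hD | hD
  · have hα : 0 ≤ α := by
      have key : α * (‖e‖^2 * ‖f‖^2 - γ^2) = ‖f‖^2 * (‖e‖^2 - γ) := by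
        linear_combination ‖f‖^2 * h1 - γ * h2
      nlinarith [sq_nonneg ‖e‖, sq_nonneg ‖f‖]
    have hβ : 0 ≤ β := by
      have key : β * (‖e‖^2 * ‖f‖^2 - γ^2) = ‖e‖^2 * (‖f‖^2 - γ) := by
        linear_combination ‖e‖^2 * h2 - γ * h1
      nlinarith [sq_nonneg ‖e‖, sq_nonneg ‖f‖]
    have := mul_nonneg hα hg1
    have := mul_nonneg hβ hg2
    linarith
  · by_cases he : ‖e‖ = 0
    · have he0 : e = 0 := norm_eq_zero.mp he
      subst he0
      simp only [inner_zero_left] at hγ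
      rw [hγ] at h2
      by_cases hf : ‖f‖ = 0
      · have hf0 : f = 0 := norm_eq_zero.mp hf
        subst hf0
        simp
      · have hf2 : (0:ℝ) < ‖f‖^2 := by positivity
        have hβ : β = 1 := by nlinarith
        simp only [inner_zero_right]
        nlinarith
    · exfalso
      have hepos : (0:ℝ) < ‖e‖^2 := by positivity
      have key : β * (γ^2 - ‖e‖^2 * ‖f‖^2) = ‖e‖^2 * (γ - ‖f‖^2) := by
        linear_combination γ * h1 - ‖e‖^2 * h2
      have h0 : ‖e‖^2 * (γ - ‖f‖^2) = 0 := by rw [← key, hD]; ring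
      have : γ = ‖f‖^2 := by
        have := mul_eq_zero.mp h0
        rcases this with h | h
        · linarith
        · linarith
      nlinarith [sq_nonneg ‖f‖]

lemma four_sq_ineq (a b cc dd : ℝ) : (a + b + cc + dd)^2 ≤ 4*(a^2 + b^2 + cc^2 + dd^2) := by
  nlinarith [sq_nonneg (a - b), sq_nonneg (a - cc), sq_nonneg (a - dd),
    sq_nonneg (b - cc), sq_nonneg (b - dd), sq_nonneg (cc - dd)]

lemma par_aux (a b : Euc n) :
    ‖(2⁻¹:ℝ) • (a + b)‖^2 = 2⁻¹*‖a‖^2 + 2⁻¹*‖b‖^2 - 4⁻¹*‖b - a‖^2 := by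
  have ha := norm_add_sq_real a b
  have hs := norm_sub_sq_real b a
  have hc : ⟪b, a⟫ = ⟪a, b⟫ := real_inner_comm a b
  have hn : ‖(2⁻¹:ℝ) • (a + b)‖^2 = 4⁻¹ * ‖a + b‖^2 := by
    rw [norm_smul, norm_inv, Real.norm_ofNat]
    ring
  rw [hn, ha, hs, hc]
  ring

set_option maxHeartbeats 1000000 in
lemma step_ineq {A B : Set (Euc n)} (hAcv : Convex ℝ A) (hBcv : Convex ℝ B)
    {PA PB : Euc n → Euc n} (hPA : IsProjection A PA) (hPB : IsProjection B PB)
    {z : Euc n} (hzA : z ∈ A) (hzB : z ∈ B)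
    (x c : Euc n) (hc : IsCircumcenter PA PB (Zbar PA PB x) c) :
    ‖c - z‖^2 ≤ ‖x - z‖^2 ∧ ‖c - x‖^2 ≤ 4 * (‖x - z‖^2 - ‖c - z‖^2) := by
  obtain ⟨hc1, hc2, hc3⟩ := hc
  set w := Zbar PA PB x with hwdef
  set y := PA (PB x) with hydef
  have hyA : y ∈ A := (hPA _).1
  set q := PB y with hqdef
  have hqB : q ∈ B := (hPB _).1
  have hw : w = (2⁻¹ : ℝ) • (y + q) := by
    rw [hwdef, Zbar, ← hydef, proj_fix hPA hyA, ← hqdef]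
  set u := PA w with hudef
  have huA : u ∈ A := (hPA _).1
  -- PB w = q
  have hvB : PB w ∈ B := (hPB w).1
  have h1 : ⟪w - PB w, q - PB w⟫ ≤ 0 := proj_vi hBcv hPB w hqB
  have h2 : ⟪y - q, PB w - q⟫ ≤ 0 := by
    have := proj_vi hBcv hPB y hvB
    rwa [← hqdef] at this
  have hwq : w - q = (2⁻¹ : ℝ) • (y - q) := by rw [hw]; module
  have h3 : ⟪w - q, PB w - q⟫ ≤ 0 := by
    rw [hwq, real_inner_smul_left]; linarith
  have h4 : ‖q - PB w‖^2 ≤ 0 := by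
    have e : q - PB w = -(w - q) + (w - PB w) := by abel
    have e2 : ⟪w - q, q - PB w⟫ = -⟪w - q, PB w - q⟫ := by
      rw [← inner_neg_right]; congr 1; abel
    calc ‖q - PB w‖^2 = ⟪q - PB w, q - PB w⟫ := (real_inner_self_eq_norm_sq _).symm
      _ = ⟪-(w - q) + (w - PB w), q - PB w⟫ := by rw [← e]
      _ = -⟪w - q, q - PB w⟫ + ⟪w - PB w, q - PB w⟫ := by
          rw [inner_add_left, inner_neg_left]
      _ ≤ 0 := by rw [e2]; linarith
  have hvq : PB w = q := by
    have h5 : ‖q - PB w‖^2 = 0 := le_antisymm h4 (sq_nonneg _)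
    have h6 : q - PB w = 0 := by
      rw [pow_eq_zero_iff (two_ne_zero)] at h5
      exact norm_eq_zero.mp h5
    have := sub_eq_zero.mp h6
    exact this.symm
  -- strong obtuseness
  have hobt : ⟪u - w, q - w⟫ + ‖u - w‖^2 ≤ 0 := by
    have hv := proj_vi hAcv hPA w hyA
    rw [← hudef] at hv
    have eyw : y - w = -(q - w) := by rw [hw]; module
    have expand : ⟪w - u, y - u⟫ = ⟪u - w, q - w⟫ + ‖u - w‖^2 := by
      have e1 : y - u = (y - w) - (u - w) := by abel
      have e2 : w - u = -(u - w) := by abel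
      rw [e1, e2, eyw, inner_neg_left, inner_sub_right, inner_neg_right,
        real_inner_self_eq_norm_sq]
      ring
    linarith [expand ▸ hv]
  -- circumcenter equations
  have h2norm : ‖(2:ℝ)‖ = 2 := by norm_num
  have hexp : ∀ v : Euc n, ‖(c - w) - (2:ℝ) • v‖^2 = ‖c - w‖^2 - 4*⟪c - w, v⟫ + 4*‖v‖^2 := by
    intro v
    rw [norm_sub_sq_real, real_inner_smul_right, norm_smul, h2norm]
    ring
  have h1' : ⟪c - w, u - w⟫ = ‖u - w‖^2 := by
    have hsq := congrArg (fun t => t^2) hc2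
    have hr1 : c - reflect PA w = (c - w) - (2:ℝ) • (u - w) := by
      simp only [reflect, ← hudef]; module
    rw [hr1, hexp (u - w)] at hsq
    linarith
  have h2' : ⟪c - w, q - w⟫ = ‖q - w‖^2 := by
    have hsq := congrArg (fun t => t^2) hc3
    have hr1 : c - reflect PB w = (c - w) - (2:ℝ) • (q - w) := by
      simp only [reflect, hvq]; module
    rw [hr1, hexp (q - w)] at hsq
    linarith
  -- span condition
  have hspan : ∃ α β : ℝ, c - w = α • (u - w) + β • (q - w) := by
    have hle : affineSpan ℝ ({w, reflect PA w, reflect PB w} : Set (Euc n)) ≤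
        AffineSubspace.mk' w (Submodule.span ℝ {u - w, q - w}) := by
      apply affineSpan_le.mpr
      rintro p hp
      simp only [Set.mem_insert_iff, Set.mem_singleton_iff] at hp
      rcases hp with rfl | rfl | rfl
      · exact AffineSubspace.self_mem_mk' _ _
      · refine AffineSubspace.mem_mk'.mpr ?_
        have hh : reflect PA w -ᵥ w = (2:ℝ) • (u - w) := by
          simp only [reflect, ← hudef, vsub_eq_sub]; module
        rw [hh]
        exact Submodule.smul_mem _ _ (Submodule.subset_span (by simp))
      · refine AffineSubspace.mem_mk'.mpr ?_
        have hh : reflect PB w -ᵥ w = (2:ℝ) • (q - w) := by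
          simp only [reflect, hvq, vsub_eq_sub]; module
        rw [hh]
        exact Submodule.smul_mem _ _ (Submodule.subset_span (by simp))
    have hcS := hle hc1
    have hmem := AffineSubspace.mem_mk'.mp hcS
    rw [vsub_eq_sub] at hmem
    obtain ⟨α, β, hab⟩ := Submodule.mem_span_pair.mp hmem
    exact ⟨α, β, hab.symm⟩
  -- the two inner product inequalities at z
  have hg1 : 0 ≤ ⟪z - c, u - w⟫ := by
    have hv := proj_vi hAcv hPA w hzA
    rw [← hudef] at hv
    have hcomm : ⟪w - u, z - u⟫ = -⟪z - u, u - w⟫ := by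
      rw [real_inner_comm, ← inner_neg_right]; congr 1; abel
    have e1 : ⟪z - c, u - w⟫ = ⟪z - u, u - w⟫ + ‖u - w‖^2 - ⟪c - w, u - w⟫ := by
      have e2 : z - c = (z - u) + (u - w) - (c - w) := by abel
      rw [e2, inner_sub_left, inner_add_left, real_inner_self_eq_norm_sq]
    rw [e1, h1']
    linarith [hcomm ▸ hv]
  have hg2 : 0 ≤ ⟪z - c, q - w⟫ := by
    have hv := proj_vi hBcv hPB w hzB
    rw [hvq] at hv
    have hcomm : ⟪w - q, z - q⟫ = -⟪z - q, q - w⟫ := by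
      rw [real_inner_comm, ← inner_neg_right]; congr 1; abel
    have e1 : ⟪z - c, q - w⟫ = ⟪z - q, q - w⟫ + ‖q - w‖^2 - ⟪c - w, q - w⟫ := by
      have e2 : z - c = (z - q) + (q - w) - (c - w) := by abel
      rw [e2, inner_sub_left, inner_add_left, real_inner_self_eq_norm_sq]
    rw [e1, h2']
    linarith [hcomm ▸ hv]
  have hkey : 0 ≤ ⟪z - c, c - w⟫ := circum_key hspan h1' h2' hobt hg1 hg2
  -- Fejér at w
  have hfq : ‖c - z‖^2 ≤ ‖w - z‖^2 - ‖c - w‖^2 := by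
    have e1 : w - z = (w - c) + (c - z) := by abel
    have e2 : ⟪w - c, c - z⟫ = ⟪z - c, c - w⟫ := by
      rw [show w - c = -(c - w) by abel, show c - z = -(z - c) by abel, inner_neg_neg,
        real_inner_comm]
    have e3 : ‖w - c‖ = ‖c - w‖ := norm_sub_rev _ _
    rw [e1, norm_add_sq_real, e2, e3]
    linarith [hkey]
  -- chain of firm inequalities
  have hA1 : ‖PB x - z‖^2 ≤ ‖x - z‖^2 - ‖PB x - x‖^2 := proj_firm hBcv hPB x hzB
  have hA2 : ‖y - z‖^2 ≤ ‖PB x - z‖^2 - ‖y - PB x‖^2 := by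
    have := proj_firm hAcv hPA (PB x) hzA
    rwa [← hydef] at this
  have hA3 : ‖q - z‖^2 ≤ ‖y - z‖^2 - ‖q - y‖^2 := by
    have := proj_firm hBcv hPB y hzB
    rwa [← hqdef] at this
  have hpar : ‖w - z‖^2 = 2⁻¹*‖y - z‖^2 + 2⁻¹*‖q - z‖^2 - 4⁻¹*‖q - y‖^2 := by
    have e1 : w - z = (2⁻¹:ℝ) • ((y - z) + (q - z)) := by rw [hw]; module
    have e2 : q - y = (q - z) - (y - z) := by abel
    rw [e1, par_aux, ← e2]
  have hchain : ‖c - z‖^2 ≤ ‖x - z‖^2 -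
      (‖c - w‖^2 + (3/4)*‖q - y‖^2 + ‖y - PB x‖^2 + ‖PB x - x‖^2) := by
    linarith only [hfq, hA1, hA2, hA3, hpar]
  have e2 : ‖w - y‖ = 2⁻¹ * ‖q - y‖ := by
    have hh : w - y = (2⁻¹:ℝ) • (q - y) := by rw [hw]; module
    rw [hh, norm_smul, norm_inv, h2norm]
  have htri : ‖c - x‖ ≤ ‖c - w‖ + 2⁻¹*‖q - y‖ + ‖y - PB x‖ + ‖PB x - x‖ := by
    have e1 : c - x = ((c - w) + (w - y) + (y - PB x)) + (PB x - x) := by abel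
    calc ‖c - x‖ = ‖((c - w) + (w - y) + (y - PB x)) + (PB x - x)‖ := by rw [← e1]
      _ ≤ ‖(c - w) + (w - y) + (y - PB x)‖ + ‖PB x - x‖ := norm_add_le _ _
      _ ≤ (‖(c - w) + (w - y)‖ + ‖y - PB x‖) + ‖PB x - x‖ := by
          have := norm_add_le ((c - w) + (w - y)) (y - PB x)
          linarith
      _ ≤ ((‖c - w‖ + ‖w - y‖) + ‖y - PB x‖) + ‖PB x - x‖ := by
          have := norm_add_le (c - w) (w - y)
          linarith
      _ = ‖c - w‖ + 2⁻¹*‖q - y‖ + ‖y - PB x‖ + ‖PB x - x‖ := by rw [e2]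
  constructor
  · linarith only [hchain, sq_nonneg ‖c - w‖, sq_nonneg ‖q - y‖, sq_nonneg ‖y - PB x‖,
      sq_nonneg ‖PB x - x‖]
  · have hsq : ‖c - x‖^2 ≤ (‖c - w‖ + 2⁻¹*‖q - y‖ + ‖y - PB x‖ + ‖PB x - x‖)^2 :=
      pow_le_pow_left₀ (norm_nonneg _) htri 2
    have h5 := four_sq_ineq ‖c - w‖ (2⁻¹*‖q - y‖) ‖y - PB x‖ ‖PB x - x‖
    have h6 : (2⁻¹*‖q - y‖)^2 = 4⁻¹ * ‖q - y‖^2 := by ring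
    have h7 : (0:ℝ) ≤ ‖q - y‖^2 := sq_nonneg _
    linarith only [hchain, hsq, h5, h6, h7]

/-- For a sequence generated by the successive cCRM with arbitrary index sequences,
`x^{k+1} - x^k → 0`. -/
theorem stmt6 {n m : ℕ} (C : Fin m → Set (Euc n))
    (hCcl : ∀ i, IsClosed (C i)) (hCcv : ∀ i, Convex ℝ (C i))
    (hne : (⋂ i, C i).Nonempty)
    (P : Fin m → Euc n → Euc n) (hP : ∀ i, IsProjection (C i) (P i))
    (ℓ r : ℕ → Fin m) (x : ℕ → Euc n)
    (hx : ∀ k : ℕ,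
      IsCircumcenter (P (ℓ k)) (P (r k)) (Zbar (P (ℓ k)) (P (r k)) (x k)) (x (k + 1))) :
    Tendsto (fun k => x (k + 1) - x k) atTop (nhds 0) := by
  obtain ⟨z, hz⟩ := hne
  rw [Set.mem_iInter] at hz
  have hstep : ∀ k : ℕ, ‖x (k+1) - z‖^2 ≤ ‖x k - z‖^2 ∧
      ‖x (k+1) - x k‖^2 ≤ 4 * (‖x k - z‖^2 - ‖x (k+1) - z‖^2) := fun k =>
    step_ineq (hCcv (ℓ k)) (hCcv (r k)) (hP (ℓ k)) (hP (r k)) (hz (ℓ k)) (hz (r k))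
      (x k) (x (k+1)) (hx k)
  set d : ℕ → ℝ := fun k => ‖x k - z‖^2 with hd
  have hant : Antitone d := antitone_nat_of_succ_le fun k => (hstep k).1
  have hbdd : BddBelow (Set.range d) := ⟨0, by rintro t ⟨k, rfl⟩; exact sq_nonneg _⟩
  have hlim : Tendsto d atTop (nhds (⨅ k, d k)) := tendsto_atTop_ciInf hant hbdd
  have hlim1 : Tendsto (fun k => d (k + 1)) atTop (nhds (⨅ k, d k)) :=
    hlim.comp (tendsto_add_atTop_nat 1)
  have hdiff : Tendsto (fun k => d k - d (k + 1)) atTop (nhds 0) := by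
    have := hlim.sub hlim1
    simpa using this
  have hub : Tendsto (fun k => 4 * (d k - d (k + 1))) atTop (nhds 0) := by
    have := hdiff.const_mul (4 : ℝ)
    simpa using this
  have hsq0 : Tendsto (fun k => ‖x (k + 1) - x k‖^2) atTop (nhds 0) :=
    tendsto_of_tendsto_of_tendsto_of_le_of_le tendsto_const_nhds hub
      (fun k => sq_nonneg _) (fun k => (hstep k).2)
  have hnorm0 : Tendsto (fun k => ‖x (k + 1) - x k‖) atTop (nhds 0) := by
    have hcont : Tendsto Real.sqrt (nhds 0) (nhds 0) := by
      have := Real.continuous_sqrt.tendsto 0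
      simpa using this
    have := hcont.comp hsq0
    simp only [Function.comp_def] at this
    convert this using 2 with k
    rw [Real.sqrt_sq (norm_nonneg _)]
  exact tendsto_zero_iff_norm_tendsto_zero.mpr hnorm0
end
end

section
/- Let M ⊆ ℝⁿ be nonempty, closed and convex, and let {z^k} ⊆ ℝⁿ be Fejér monotone with respect to M. If the scalar sequence {dist(z^k, M)} converges Q-linearly to 0, i.e. limsup_{k→∞} dist(z^{k+1}, M)/dist(z^k, M) < 1 (with dist(z^k, M) > 0 for all k), then {z^k} converges R-linearly to a point z̄ ∈ M, i.e. z^k → z̄ ∈ M and limsup_{k→∞} ‖z^k − z̄‖^{1/k} < 1. -/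
/-!
Fejér monotonicity gives `dist(z^{k+1}, M) ≤ dist(z^k, M)` and, taking the infimum over `s ∈ M`
in `‖z^k - z^{k+1}‖ ≤ ‖z^k - s‖ + ‖z^{k+1} - s‖ ≤ 2 ‖z^k - s‖`, the step bound
`‖z^k - z^{k+1}‖ ≤ 2 dist(z^k, M)`.
Q-linear convergence of the distances makes them bounded by `C q^k` with `q < 1`, so the steps
are geometrically summable: `z^k` is Cauchy, its limit `z̄` lies in `M` (closed, distance `0`),
and `‖z^k - z̄‖ ≤ 2 C q^k / (1 - q)`, whose `k`-th roots have limsup at most `q`.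
-/

noncomputable section

open Filter Metric RealInnerProductSpace

open Topology

def FejerMonotone {α : Type*} [PseudoMetricSpace α] (z : ℕ → α) (M : Set α) : Prop :=
  ∀ s ∈ M, ∀ k, dist (z (k + 1)) s ≤ dist (z k) s

namespace FejerMonotone

variable {α : Type*} [PseudoMetricSpace α] {z : ℕ → α} {M : Set α}

theorem antitone_infDist (hz : FejerMonotone z M) (hne : M.Nonempty) :
    Antitone fun k => infDist (z k) M :=
  antitone_nat_of_succ_le fun k => (le_infDist hne).2 fun s hs =>
    (infDist_le_dist_of_mem hs).trans (hz s hs k)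

theorem dist_succ_le_two_mul_infDist (hz : FejerMonotone z M) (hne : M.Nonempty) (k : ℕ) :
    dist (z k) (z (k + 1)) ≤ 2 * infDist (z k) M := by
  have : dist (z k) (z (k + 1)) / 2 ≤ infDist (z k) M := (le_infDist hne).2 fun s hs => by
    linarith [dist_triangle_right (z k) (z (k + 1)) s, hz s hs k]
  linarith

theorem exists_tendsto_of_infDist_le_geometric [CompleteSpace α] (hz : FejerMonotone z M)
    (hne : M.Nonempty) (hcl : IsClosed M) {C q : ℝ} (hq0 : 0 ≤ q) (hq1 : q < 1)
    (hd : ∀ k, infDist (z k) M ≤ C * q ^ k) :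
    ∃ zbar ∈ M, Tendsto z atTop (𝓝 zbar) ∧ ∀ k, dist (z k) zbar ≤ 2 * C * q ^ k / (1 - q) := by
  have hstep : ∀ k, dist (z k) (z (k + 1)) ≤ 2 * C * q ^ k := fun k => by
    linarith [hz.dist_succ_le_two_mul_infDist hne k, hd k]
  obtain ⟨zbar, hlim⟩ := cauchySeq_tendsto_of_complete (cauchySeq_of_le_geometric q _ hq1 hstep)
  have hd0 : Tendsto (fun k => infDist (z k) M) atTop (𝓝 0) := by
    refine squeeze_zero (fun _ => infDist_nonneg) hd ?_
    simpa using (tendsto_pow_atTop_nhds_zero_of_lt_one hq0 hq1).const_mul C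
  have hzbar : infDist zbar M = 0 :=
    tendsto_nhds_unique (((continuous_infDist_pt M).tendsto zbar).comp hlim) hd0
  exact ⟨zbar, (hcl.mem_iff_infDist_zero hne).2 hzbar, hlim,
    dist_le_of_le_geometric_of_tendsto q _ hq1 hstep hlim⟩

end FejerMonotone

section GeometricBounds

variable {d : ℕ → ℝ}

theorem exists_eventually_succ_le_mul_of_limsup_div_lt_one (hpos : ∀ k, 0 < d k)
    (hanti : Antitone d) (h : limsup (fun k => d (k + 1) / d k) atTop < 1) :
    ∃ q < 1, 0 < q ∧ ∀ᶠ k in atTop, d (k + 1) ≤ q * d k := by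
  obtain ⟨q, hLq, hq1⟩ := exists_between (max_lt h zero_lt_one)
  have hbdd : IsBoundedUnder (· ≤ ·) atTop fun k => d (k + 1) / d k :=
    isBoundedUnder_of ⟨1, fun k => (div_le_one (hpos k)).2 (hanti k.le_succ)⟩
  refine ⟨q, hq1, (le_max_right _ _).trans_lt hLq,
    (eventually_lt_of_limsup_lt ((le_max_left _ _).trans_lt hLq) hbdd).mono fun k hk => ?_⟩
  exact ((div_lt_iff₀ (hpos k)).1 hk).le

/-- Before the ratio bound kicks in at `N`, antitonicity keeps `d k ≤ d 0 ≤ C q ^ k`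
with `C = max (d 0) 0 / q ^ N`. -/
theorem Antitone.exists_le_geometric_of_eventually_succ_le_mul (hanti : Antitone d) {q : ℝ}
    (hq0 : 0 < q) (hq1 : q ≤ 1) (h : ∀ᶠ k in atTop, d (k + 1) ≤ q * d k) :
    ∃ C, ∀ k, d k ≤ C * q ^ k := by
  obtain ⟨N, hN⟩ := eventually_atTop.1 h
  set C := max (d 0) 0 / q ^ N
  have hstart : ∀ j ≤ N, d 0 ≤ C * q ^ j := fun j hj =>
    calc d 0 ≤ max (d 0) 0 := le_max_left _ _
      _ = C * q ^ N := (div_mul_cancel₀ _ (pow_ne_zero N hq0.ne')).symm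
      _ ≤ C * q ^ j := mul_le_mul_of_nonneg_left (pow_le_pow_of_le_one hq0.le hq1 hj)
          (div_nonneg (le_max_right _ _) (pow_nonneg hq0.le N))
  refine ⟨C, fun k => ?_⟩
  induction k with
  | zero => exact hstart 0 N.zero_le
  | succ k ih =>
    rcases lt_or_ge k N with hk | hk
    · exact (hanti k.succ.zero_le).trans (hstart (k + 1) hk)
    · calc d (k + 1) ≤ q * d k := hN k hk
        _ ≤ q * (C * q ^ k) := mul_le_mul_of_nonneg_left ih hq0.le
        _ = C * q ^ (k + 1) := by ring

theorem limsup_rpow_one_div_le_of_le_geometric (hnonneg : ∀ k, 0 ≤ d k) {C q : ℝ} (hC : 0 < C)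
    (hq : 0 ≤ q) (h : ∀ k, d k ≤ C * q ^ k) :
    limsup (fun k : ℕ => d k ^ (1 / (k : ℝ))) atTop ≤ q := by
  have hroot : Tendsto (fun k : ℕ => C ^ (1 / (k : ℝ)) * q) atTop (𝓝 q) := by
    have := ((Real.continuousAt_const_rpow hC.ne').tendsto.comp
      tendsto_one_div_atTop_nhds_zero_nat).mul_const q
    simpa [Function.comp_def] using this
  have hle : ∀ᶠ k : ℕ in atTop, d k ^ (1 / (k : ℝ)) ≤ C ^ (1 / (k : ℝ)) * q := by
    filter_upwards [eventually_ne_atTop 0] with k hk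
    calc d k ^ (1 / (k : ℝ)) ≤ (C * q ^ k) ^ (1 / (k : ℝ)) :=
          Real.rpow_le_rpow (hnonneg k) (h k) (by positivity)
      _ = C ^ (1 / (k : ℝ)) * q := by
          rw [Real.mul_rpow hC.le (pow_nonneg hq k), ← Real.rpow_natCast,
            ← Real.rpow_mul hq, mul_one_div_cancel (by exact_mod_cast hk), Real.rpow_one]
  calc limsup (fun k : ℕ => d k ^ (1 / (k : ℝ))) atTop
      ≤ limsup (fun k : ℕ => C ^ (1 / (k : ℝ)) * q) atTop :=
        limsup_le_limsup hle (isCoboundedUnder_le_of_eventually_le atTop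
          (Eventually.of_forall fun k => Real.rpow_nonneg (hnonneg k) _)) hroot.isBoundedUnder_le
    _ = q := hroot.limsup_eq

end GeometricBounds

theorem stmt10_general {n : ℕ} (M : Set (Euc n))
    (hMne : M.Nonempty) (hMcl : IsClosed M)
    (z : ℕ → Euc n)
    (hFejer : ∀ s ∈ M, ∀ k : ℕ, ‖z (k + 1) - s‖ ≤ ‖z k - s‖)
    (hpos : ∀ k : ℕ, 0 < infDist (z k) M)
    (hQlin : limsup (fun k => infDist (z (k + 1)) M / infDist (z k) M) atTop < 1) :
    ∃ zbar ∈ M, Tendsto z atTop (nhds zbar) ∧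
      limsup (fun k : ℕ => ‖z k - zbar‖ ^ (1 / (k : ℝ))) atTop < 1 := by
  have hz : FejerMonotone z M := fun s hs k => by simpa only [dist_eq_norm] using hFejer s hs k
  have hanti := hz.antitone_infDist hMne
  obtain ⟨q, hq1, hq0, hratio⟩ :=
    exists_eventually_succ_le_mul_of_limsup_div_lt_one hpos hanti hQlin
  obtain ⟨C, hC⟩ := hanti.exists_le_geometric_of_eventually_succ_le_mul hq0 hq1.le hratio
  obtain ⟨zbar, hzbarM, hlim, hdist⟩ :=
    hz.exists_tendsto_of_infDist_le_geometric hMne hMcl hq0.le hq1 hC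
  have hC0 : 0 < C := by simpa using (hpos 0).trans_le (hC 0)
  refine ⟨zbar, hzbarM, hlim, lt_of_le_of_lt ?_ hq1⟩
  refine limsup_rpow_one_div_le_of_le_geometric (fun k => norm_nonneg _)
    (div_pos (mul_pos two_pos hC0) (sub_pos.2 hq1)) hq0.le fun k => ?_
  simpa only [dist_eq_norm, mul_div_right_comm] using hdist k

/-- If a Fejér monotone sequence with respect to a nonempty closed convex set `M` is such
that `dist(z^k, M)` converges Q-linearly to `0`, then `z^k` converges R-linearly to a
point of `M`. -/
theorem stmt10 {n : ℕ} (M : Set (Euc n))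
    (hMne : M.Nonempty) (hMcl : IsClosed M) (hMcv : Convex ℝ M)
    (z : ℕ → Euc n)
    (hFejer : ∀ s ∈ M, ∀ k : ℕ, ‖z (k + 1) - s‖ ≤ ‖z k - s‖)
    (hpos : ∀ k : ℕ, 0 < infDist (z k) M)
    (hQlin : limsup (fun k => infDist (z (k + 1)) M / infDist (z k) M) atTop < 1) :
    ∃ zbar ∈ M, Tendsto z atTop (nhds zbar) ∧
      limsup (fun k : ℕ => ‖z k - zbar‖ ^ (1 / (k : ℝ))) atTop < 1 :=
  stmt10_general M hMne hMcl z hFejer hpos hQlin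
end
end

section
/- Let C_1, …, C_m ⊆ ℝⁿ be closed convex sets with C := ∩_{i=1}^m C_i ≠ ∅, and suppose the error bound EB1 holds at z̄ ∈ C with constant ω ∈ (0,1) on a neighborhood V of z̄. Let B be a ball centered at z̄ contained in V, let z ∈ B, and let ℓ, r ∈ {1, …, m} satisfy dist(z, C_ℓ) ≥ dist(z, C_i) for all i and dist(P_{C_ℓ}(z), C_r) ≥ dist(P_{C_ℓ}(z), C_i) for all i. Then, with β := √(1 − ω²), dist(P_{C_r}(P_{C_ℓ}(z)), C) ≤ β² · dist(z, C). -/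
noncomputable section

open Filter Metric RealInnerProductSpace

lemma proj_inner_sq {n : ℕ} {A : Set (Euc n)} (hA : Convex ℝ A) {P : Euc n → Euc n}
    (hP : IsProjection A P) (x : Euc n) {c : Euc n} (hc : c ∈ A) :
    dist (P x) c ^ 2 + dist x (P x) ^ 2 ≤ dist x c ^ 2 := by
  haveI : Nonempty A := ⟨⟨P x, (hP x).1⟩⟩
  have hmin : (‖x - P x‖ = ⨅ w : A, ‖x - w‖) := by
    refine le_antisymm (le_ciInf fun w => (hP x).2 w w.2) ?_
    exact ciInf_le ⟨0, fun _ ⟨_, h⟩ => h ▸ norm_nonneg _⟩ (⟨P x, (hP x).1⟩ : A)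
  have hinner : ⟪x - P x, c - P x⟫ ≤ 0 :=
    (norm_eq_iInf_iff_real_inner_le_zero hA (hP x).1).1 hmin c hc
  have hexp : ‖(x - P x) + (P x - c)‖ ^ 2
      = ‖x - P x‖ ^ 2 + 2 * ⟪x - P x, P x - c⟫ + ‖P x - c‖ ^ 2 :=
    norm_add_sq_real _ _
  have h1 : (x - P x) + (P x - c) = x - c := by abel
  have h2 : ⟪x - P x, P x - c⟫ = - ⟪x - P x, c - P x⟫ := by
    rw [← inner_neg_right]; congr 1; abel
  rw [h1] at hexp
  simp only [dist_eq_norm]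
  rw [hexp, h2]
  nlinarith [norm_nonneg (P x - c), norm_nonneg (x - P x)]

lemma proj_infDist {n : ℕ} {A : Set (Euc n)} (hAcl : IsClosed A) {P : Euc n → Euc n}
    (hP : IsProjection A P) (x : Euc n) : infDist x A = dist x (P x) := by
  refine le_antisymm (infDist_le_dist_of_mem (hP x).1) ?_
  obtain ⟨a, haA, ha⟩ := hAcl.exists_infDist_eq_dist ⟨P x, (hP x).1⟩ x
  rw [ha]
  simpa [dist_eq_norm] using (hP x).2 a haA

/-- One projection step: `dist(Px, S)² + dist(x, A)² ≤ dist(x, S)²` for closed `S ⊆ A`. -/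
lemma step_sq {n : ℕ} {A S : Set (Euc n)} (hA : Convex ℝ A) (hAcl : IsClosed A) {P : Euc n → Euc n}
    (hP : IsProjection A P) (hSne : S.Nonempty) (hScl : IsClosed S) (hSA : S ⊆ A)
    (x : Euc n) :
    infDist (P x) S ^ 2 + infDist x A ^ 2 ≤ infDist x S ^ 2 := by
  obtain ⟨c, hcS, hcd⟩ := hScl.exists_infDist_eq_dist hSne x
  have h1 : infDist (P x) S ≤ dist (P x) c := infDist_le_dist_of_mem hcS
  have h2 : infDist x A = dist x (P x) := proj_infDist hAcl hP x
  have h3 := proj_inner_sq hA hP x (hSA hcS)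
  have h4 : (0:ℝ) ≤ infDist (P x) S := infDist_nonneg
  have h6 : infDist (P x) S ^ 2 ≤ dist (P x) c ^ 2 := pow_le_pow_left₀ h4 h1 2
  rw [hcd, h2]
  linarith

/-- Under EB1, one step of the sequential projection method with the most violated
constraint control contracts the distance to `C` by the factor `β² = 1 - ω²`. -/
theorem stmt11 {n m : ℕ} (C : Fin m → Set (Euc n))
    (hCcl : ∀ i, IsClosed (C i)) (hCcv : ∀ i, Convex ℝ (C i))
    (hne : (⋂ i, C i).Nonempty)
    (zbar : Euc n) (hzbar : zbar ∈ ⋂ i, C i)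
    (ω : ℝ) (hω : ω ∈ Set.Ioo (0 : ℝ) 1)
    (V : Set (Euc n)) (hV : V ∈ nhds zbar)
    (hEB : ∀ z ∈ V, ω * infDist z (⋂ i, C i) ≤ ⨆ i, infDist z (C i))
    (ρ : ℝ) (hρ : 0 < ρ) (hBV : closedBall zbar ρ ⊆ V)
    (z : Euc n) (hz : z ∈ closedBall zbar ρ)
    (P : Fin m → Euc n → Euc n) (hP : ∀ i, IsProjection (C i) (P i))
    (ℓ r : Fin m)
    (hℓ : ∀ i, infDist z (C i) ≤ infDist z (C ℓ))
    (hr : ∀ i, infDist (P ℓ z) (C i) ≤ infDist (P ℓ z) (C r)) :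
    infDist (P r (P ℓ z)) (⋂ i, C i) ≤
      Real.sqrt (1 - ω ^ 2) ^ 2 * infDist z (⋂ i, C i) := by
  obtain ⟨hω0, hω1⟩ := hω
  haveI : Nonempty (Fin m) := ⟨ℓ⟩
  have hω2 : (0:ℝ) ≤ 1 - ω ^ 2 := by nlinarith
  rw [Real.sq_sqrt hω2]
  set S : Set (Euc n) := ⋂ i, C i with hS
  have hScl : IsClosed S := isClosed_iInter hCcl
  have hSsub : ∀ i, S ⊆ C i := fun i => Set.iInter_subset _ i
  set d0 := infDist z S
  set d1 := infDist (P ℓ z) S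
  set d2 := infDist (P r (P ℓ z)) S
  have hd0 : (0:ℝ) ≤ d0 := infDist_nonneg
  have hd1 : (0:ℝ) ≤ d1 := infDist_nonneg
  have hd2 : (0:ℝ) ≤ d2 := infDist_nonneg
  -- EB at z
  have hEBz : ω * d0 ≤ infDist z (C ℓ) :=
    (hEB z (hBV hz)).trans (ciSup_le hℓ)
  -- step 1
  have hstep1 : d1 ^ 2 + infDist z (C ℓ) ^ 2 ≤ d0 ^ 2 :=
    step_sq (hCcv ℓ) (hCcl ℓ) (hP ℓ) hne hScl (hSsub ℓ) z
  have hd1sq : d1 ^ 2 ≤ (1 - ω ^ 2) * d0 ^ 2 := by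
    have := pow_le_pow_left₀ (mul_nonneg hω0.le hd0) hEBz 2
    nlinarith
  -- P ℓ z stays in the ball
  have hzl : zbar ∈ C ℓ := hSsub ℓ hzbar
  have hball : P ℓ z ∈ closedBall zbar ρ := by
    have := proj_inner_sq (hCcv ℓ) (hP ℓ) z hzl
    have h1 : dist (P ℓ z) zbar ≤ dist z zbar := by
      nlinarith [dist_nonneg (x := P ℓ z) (y := zbar), dist_nonneg (x := z) (y := zbar),
        dist_nonneg (x := z) (y := P ℓ z)]
    exact mem_closedBall.2 (h1.trans (mem_closedBall.1 hz))
  -- EB at P ℓ z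
  have hEBz2 : ω * d1 ≤ infDist (P ℓ z) (C r) :=
    (hEB (P ℓ z) (hBV hball)).trans (ciSup_le hr)
  -- step 2
  have hstep2 : d2 ^ 2 + infDist (P ℓ z) (C r) ^ 2 ≤ d1 ^ 2 :=
    step_sq (hCcv r) (hCcl r) (hP r) hne hScl (hSsub r) (P ℓ z)
  have hd2sq : d2 ^ 2 ≤ ((1 - ω ^ 2) * d0) ^ 2 := by
    have h7 := pow_le_pow_left₀ (mul_nonneg hω0.le hd1) hEBz2 2
    have h8 : (1 - ω ^ 2) * d1 ^ 2 ≤ (1 - ω ^ 2) * ((1 - ω ^ 2) * d0 ^ 2) :=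
      mul_le_mul_of_nonneg_left hd1sq hω2
    nlinarith
  have hrhs : (0:ℝ) ≤ (1 - ω ^ 2) * d0 := mul_nonneg hω2 hd0
  calc d2 = Real.sqrt (d2 ^ 2) := (Real.sqrt_sq hd2).symm
    _ ≤ Real.sqrt (((1 - ω ^ 2) * d0) ^ 2) := Real.sqrt_le_sqrt hd2sq
    _ = (1 - ω ^ 2) * d0 := Real.sqrt_sq hrhs
end
end

section
/- Let C_1, …, C_m ⊆ ℝⁿ be closed convex sets with C := ∩_{i=1}^m C_i ≠ ∅, and suppose the error bound EB1 holds at z̄ ∈ C with constant ω ∈ (0,1) on a neighborhood V of z̄. Let B be a ball centered at z̄ contained in V, let z ∈ B, and let ℓ, r ∈ {1, …, m} be such that dist(z, C_ℓ) ≥ dist(z, C_i) for all i. Then, with β := √(1 − ω²), dist((1/2)(P_{C_ℓ}(z) + P_{C_r}(z)), C) ≤ ((1 + β)/2) · dist(z, C). -/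
noncomputable section

open Filter Metric RealInnerProductSpace

/-- Under EB1, one step of the simultaneous projection method with the most violated
constraint control contracts the distance to `C` by the factor `(1 + β)/2`,
`β = √(1 - ω²)`. -/
theorem stmt12 {n m : ℕ} (C : Fin m → Set (Euc n))
    (hCcl : ∀ i, IsClosed (C i)) (hCcv : ∀ i, Convex ℝ (C i))
    (hne : (⋂ i, C i).Nonempty)
    (zbar : Euc n) (hzbar : zbar ∈ ⋂ i, C i)
    (ω : ℝ) (hω : ω ∈ Set.Ioo (0 : ℝ) 1)
    (V : Set (Euc n)) (hV : V ∈ nhds zbar)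
    (hEB : ∀ z ∈ V, ω * infDist z (⋂ i, C i) ≤ ⨆ i, infDist z (C i))
    (ρ : ℝ) (hρ : 0 < ρ) (hBV : closedBall zbar ρ ⊆ V)
    (z : Euc n) (hz : z ∈ closedBall zbar ρ)
    (P : Fin m → Euc n → Euc n) (hP : ∀ i, IsProjection (C i) (P i))
    (ℓ r : Fin m)
    (hℓ : ∀ i, infDist z (C i) ≤ infDist z (C ℓ)) :
    infDist ((2⁻¹ : ℝ) • (P ℓ z + P r z)) (⋂ i, C i) ≤
      ((1 + Real.sqrt (1 - ω ^ 2)) / 2) * infDist z (⋂ i, C i) := by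

  have hzV : z ∈ V := hBV hz
  obtain ⟨p, hpC, hpd⟩ := (isClosed_iInter hCcl).exists_infDist_eq_dist hne z
  set d := infDist z (⋂ i, C i) with hdDef
  have hd0 : (0:ℝ) ≤ d := infDist_nonneg
  have hdp : d = ‖z - p‖ := by rw [hpd, dist_eq_norm]
  have hproj : ∀ i, ‖P i z - p‖ ^ 2 ≤ d ^ 2 - ‖z - P i z‖ ^ 2 := by
    intro i
    have hpi : p ∈ C i := Set.mem_iInter.mp hpC i
    haveI : Nonempty (C i) := ⟨⟨P i z, (hP i z).1⟩⟩
    have hmin : ‖z - P i z‖ = ⨅ w : C i, ‖z - w‖ := by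
      apply le_antisymm
      · exact le_ciInf fun w => (hP i z).2 w w.2
      · exact ciInf_le ⟨0, fun x ⟨w, hw⟩ => hw ▸ norm_nonneg _⟩ (⟨P i z, (hP i z).1⟩ : C i)
    have hinner : ⟪z - P i z, p - P i z⟫ ≤ 0 :=
      (norm_eq_iInf_iff_real_inner_le_zero (hCcv i) (hP i z).1).mp hmin p hpi
    have hexp : ‖(z - P i z) - (p - P i z)‖ ^ 2
        = ‖z - P i z‖ ^ 2 - 2 * ⟪z - P i z, p - P i z⟫ + ‖p - P i z‖ ^ 2 :=
      norm_sub_sq_real _ _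
    have h1 : z - p = (z - P i z) - (p - P i z) := by abel
    have h2 : ‖P i z - p‖ = ‖p - P i z‖ := norm_sub_rev _ _
    rw [h2, hdp, h1, hexp]
    linarith
  haveI : Nonempty (Fin m) := ⟨ℓ⟩
  have hsup : ω * d ≤ ‖z - P ℓ z‖ := by
    have h1 : (⨆ i, infDist z (C i)) ≤ infDist z (C ℓ) := ciSup_le hℓ
    have h2 : infDist z (C ℓ) ≤ dist z (P ℓ z) := infDist_le_dist_of_mem (hP ℓ z).1
    rw [dist_eq_norm] at h2
    exact ((hEB z hzV).trans h1).trans h2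
  set β := Real.sqrt (1 - ω ^ 2) with hβ
  have hβ0 : 0 ≤ β := Real.sqrt_nonneg _
  have hβsq : β ^ 2 = 1 - ω ^ 2 := Real.sq_sqrt (by nlinarith [hω.1, hω.2])
  have hℓb : ‖P ℓ z - p‖ ≤ β * d := by
    have h := hproj ℓ
    nlinarith [norm_nonneg (P ℓ z - p), mul_nonneg hβ0 hd0, hω.1,
      mul_nonneg (le_of_lt hω.1) hd0, sq_nonneg (‖P ℓ z - p‖ + β * d)]
  have hrb : ‖P r z - p‖ ≤ d := by
    have h := hproj r
    nlinarith [norm_nonneg (P r z - p), sq_nonneg (‖z - P r z‖),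
      sq_nonneg (‖P r z - p‖ + d)]
  calc infDist ((2⁻¹ : ℝ) • (P ℓ z + P r z)) (⋂ i, C i)
      ≤ dist ((2⁻¹ : ℝ) • (P ℓ z + P r z)) p := infDist_le_dist_of_mem hpC
    _ = ‖(2⁻¹ : ℝ) • ((P ℓ z - p) + (P r z - p))‖ := by
        rw [dist_eq_norm]; congr 1; module
    _ ≤ 2⁻¹ * (‖P ℓ z - p‖ + ‖P r z - p‖) := by
        rw [norm_smul]
        simp only [norm_inv, Real.norm_ofNat]
        gcongr
        exact norm_add_le _ _
    _ ≤ ((1 + β) / 2) * d := by linarith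
end
end

section
/- Let M ⊆ ℝⁿ be nonempty, closed and convex, and let {z^k} ⊆ ℝⁿ be Fejér monotone with respect to M with dist(z^k, M) > 0 for all k. If the scalar sequence {dist(z^k, M)} converges superlinearly to 0, i.e. lim_{k→∞} dist(z^{k+1}, M)/dist(z^k, M) = 0, then {z^k} converges superlinearly to a point z̄ ∈ M: z^k → z̄ ∈ M and, provided z^k ≠ z̄ for all k, lim_{k→∞} ‖z^{k+1} − z̄‖/‖z^k − z̄‖ = 0. -/
noncomputable section

open Filter Metric RealInnerProductSpace

lemma le_infDist' {α : Type*} [MetricSpace α] {s : Set α} (hs : s.Nonempty) {x : α} {b : ℝ}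
    (h : ∀ y ∈ s, b ≤ dist x y) : b ≤ infDist x s := by
  haveI := hs.to_subtype
  rw [infDist_eq_iInf]
  exact le_ciInf fun y => h y y.2

/-- If a Fejér monotone sequence with respect to a nonempty closed convex set `M` is such
that `dist(z^k, M)` converges superlinearly to `0`, then `z^k` converges superlinearly to
a point `z̄ ∈ M`. -/
theorem stmt19 {n : ℕ} (M : Set (Euc n))
    (hMne : M.Nonempty) (hMcl : IsClosed M) (hMcv : Convex ℝ M)
    (z : ℕ → Euc n)
    (hFejer : ∀ s ∈ M, ∀ k : ℕ, ‖z (k + 1) - s‖ ≤ ‖z k - s‖)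
    (hpos : ∀ k : ℕ, 0 < infDist (z k) M)
    (hsuper : Tendsto (fun k => infDist (z (k + 1)) M / infDist (z k) M) atTop (nhds 0)) :
    ∃ zbar ∈ M, Tendsto z atTop (nhds zbar) ∧
      ((∀ k : ℕ, z k ≠ zbar) →
        Tendsto (fun k => ‖z (k + 1) - zbar‖ / ‖z k - zbar‖) atTop (nhds 0)) := by
  set d : ℕ → ℝ := fun k => infDist (z k) M with hd
  -- distance to each point of M is antitone
  have hanti : ∀ s ∈ M, Antitone fun k => dist (z k) s := by
    intro s hs
    apply antitone_nat_of_succ_le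
    intro k
    simpa [dist_eq_norm] using hFejer s hs k
  -- d is antitone
  have hmono : ∀ k, d (k + 1) ≤ d k := by
    intro k
    refine le_infDist' hMne ?_
    intro s hs
    calc d (k + 1) ≤ dist (z (k + 1)) s := infDist_le_dist_of_mem hs
      _ ≤ dist (z k) s := hanti s hs (Nat.le_succ k)
  have hdanti : Antitone d := antitone_nat_of_succ_le hmono
  -- d tends to 0
  have hbd : BddBelow (Set.range d) := ⟨0, by rintro x ⟨k, rfl⟩; exact (hpos k).le⟩
  have hL : Tendsto d atTop (nhds (⨅ k, d k)) := tendsto_atTop_ciInf hdanti hbd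
  have hLpos : 0 ≤ ⨅ k, d k := le_ciInf fun k => (hpos k).le
  have hd0 : Tendsto d atTop (nhds 0) := by
    rcases eq_or_lt_of_le hLpos with h | h
    · rwa [← h] at hL
    · exfalso
      have h1 : Tendsto (fun k => d (k + 1)) atTop (nhds (⨅ k, d k)) :=
        hL.comp (tendsto_add_atTop_nat 1)
      have hratio : Tendsto (fun k => d (k + 1) / d k) atTop
          (nhds ((⨅ k, d k) / (⨅ k, d k))) := h1.div hL (ne_of_gt h)
      rw [div_self (ne_of_gt h)] at hratio
      exact one_ne_zero (tendsto_nhds_unique hratio hsuper)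
  -- Cauchy
  have hbound : ∀ m k N : ℕ, N ≤ m → N ≤ k → dist (z m) (z k) ≤ 2 * d N := by
    intro m k N hm hk
    have : dist (z m) (z k) / 2 ≤ d N := by
      refine le_infDist' hMne ?_
      intro s hs
      have h1 : dist (z m) s ≤ dist (z N) s := hanti s hs hm
      have h2 : dist (z k) s ≤ dist (z N) s := hanti s hs hk
      have := dist_triangle (z m) s (z k)
      rw [dist_comm s (z k)] at this
      linarith
    linarith
  have hcauchy : CauchySeq z := cauchySeq_of_le_tendsto_0 (fun N => 2 * d N) hbound
    (by simpa using hd0.const_mul 2)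
  obtain ⟨zbar, hzb⟩ := cauchySeq_tendsto_of_complete hcauchy
  -- zbar ∈ M
  have hinf : Tendsto (fun k => infDist (z k) M) atTop (nhds (infDist zbar M)) :=
    ((continuous_infDist_pt M).tendsto zbar).comp hzb
  have hinf0 : infDist zbar M = 0 := tendsto_nhds_unique hinf hd0
  have hzbM : zbar ∈ M := (hMcl.mem_iff_infDist_zero hMne).2 hinf0
  refine ⟨zbar, hzbM, hzb, ?_⟩
  intro hne
  -- upper bound: dist (z k) zbar ≤ 2 * d k
  have hub : ∀ k, dist (z k) zbar ≤ 2 * d k := by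
    intro k
    have : dist (z k) zbar / 2 ≤ d k := by
      refine le_infDist' hMne ?_
      intro s hs
      have hlim : Tendsto (fun m => dist (z m) s) atTop (nhds (dist zbar s)) :=
        hzb.dist tendsto_const_nhds
      have h1 : dist zbar s ≤ dist (z k) s :=
        le_of_tendsto hlim (eventually_atTop.2 ⟨k, fun m hm => hanti s hs hm⟩)
      have := dist_triangle (z k) s zbar
      rw [dist_comm s zbar] at this
      linarith
    linarith
  have hlb : ∀ k, d k ≤ dist (z k) zbar := fun k => infDist_le_dist_of_mem hzbM
  have hkey : ∀ k, ‖z (k + 1) - zbar‖ / ‖z k - zbar‖ ≤ 2 * (d (k + 1) / d k) := by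
    intro k
    rw [← dist_eq_norm, ← dist_eq_norm, mul_div_assoc']
    exact div_le_div₀ (by linarith [(hpos (k + 1)).le, hub (k + 1)]) (hub (k + 1))
      (hpos k) (hlb k)
  have htarget : Tendsto (fun k => 2 * (d (k + 1) / d k)) atTop (nhds 0) := by
    simpa using hsuper.const_mul 2
  exact squeeze_zero (fun k => by positivity) hkey htarget
end
end
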